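/- arXiv:1807.08196 — 8 statements merged into one kernel-verified Lean document; each statement's English description precedes it below -/
import Mathlib

section
/- Let A be a regularised algebra. Then the family P_a forms a one-parameter semigroup: P_{a₁} ∘ η_{a₂} = η_{a₁+a₂} and P_{a₁} ∘ P_{a₂} = P_{a₁+a₂} for all a₁, a₂ > 0. -/
open CategoryTheory MonoidalCategory

/-- In a regularised algebra the maps `P_a` form a one-parameter semigroup:
`P_{a₁} ∘ η_{a₂} = η_{a₁+a₂}` and `P_{a₁} ∘ P_{a₂} = P_{a₁+a₂}`. -/
theorem stmt1 {C : Type*} [Category C] [MonoidalCategory C]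
    [∀ X Y : C, TopologicalSpace (X ⟶ Y)] [∀ X Y : C, T2Space (X ⟶ Y)]
    (hcomp₁ : ∀ {X Y Z : C} (f : X ⟶ Y), Continuous fun g : Y ⟶ Z => f ≫ g)
    (hcomp₂ : ∀ {X Y Z : C} (g : Y ⟶ Z), Continuous fun f : X ⟶ Y => f ≫ g)
    (A : C) (μ : ℝ → ((A ⊗ A) ⟶ A)) (η : ℝ → (𝟙_ C ⟶ A)) (P : ℝ → (A ⟶ A))
    (hunit : ∀ a₁ a₂ b₁ b₂ : ℝ, 0 < a₁ → 0 < a₂ → 0 < b₁ → 0 < b₂ → a₁ + a₂ = b₁ + b₂ →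
      (ρ_ A).inv ≫ (A ◁ η a₂) ≫ μ a₁ = (λ_ A).inv ≫ (η b₂ ▷ A) ≫ μ b₁)
    (hassoc : ∀ a₁ a₂ b₁ b₂ : ℝ, 0 < a₁ → 0 < a₂ → 0 < b₁ → 0 < b₂ → a₁ + a₂ = b₁ + b₂ →
      (A ◁ μ a₂) ≫ μ a₁ = (α_ A A A).inv ≫ (μ b₂ ▷ A) ≫ μ b₁)
    (hP : ∀ a₁ a₂ : ℝ, 0 < a₁ → 0 < a₂ →
      P (a₁ + a₂) = (ρ_ A).inv ≫ (A ◁ η a₂) ≫ μ a₁)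
    (hPcont : ContinuousOn P (Set.Ioi 0))
    (hPlim : Filter.Tendsto P (nhdsWithin 0 (Set.Ioi 0)) (nhds (𝟙 A))) :
    ∀ a₁ a₂ : ℝ, 0 < a₁ → 0 < a₂ →
      η a₂ ≫ P a₁ = η (a₁ + a₂) ∧ P a₂ ≫ P a₁ = P (a₁ + a₂) := by
  -- Exchange identity: `η t ≫ P (u + v) = η v ≫ P (u + t)`.
  have hE : ∀ t u v : ℝ, 0 < t → 0 < u → 0 < v →
      η t ≫ P (u + v) = η v ≫ P (u + t) := by
    intro t u v ht hu hv
    rw [hP u v hu hv, hP u t hu ht, hunit u t u t hu ht hu ht rfl]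
    calc η t ≫ (ρ_ A).inv ≫ (A ◁ η v) ≫ μ u
        = (ρ_ (𝟙_ C)).inv ≫ (η t ▷ 𝟙_ C) ≫ (A ◁ η v) ≫ μ u := by
          rw [rightUnitor_inv_naturality_assoc]
      _ = (ρ_ (𝟙_ C)).inv ≫ (𝟙_ C ◁ η v) ≫ (η t ▷ A) ≫ μ u := by
          rw [← whisker_exchange_assoc]
      _ = η v ≫ (λ_ A).inv ≫ (η t ▷ A) ≫ μ u := by
          rw [leftUnitor_inv_naturality_assoc, unitors_inv_equal]
  -- Part 1
  have hpart1 : ∀ a₁ a₂ : ℝ, 0 < a₁ → 0 < a₂ → η a₂ ≫ P a₁ = η (a₁ + a₂) := by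
    intro a₁ a₂ h₁ h₂
    -- For every δ > 0 : η (a₁+a₂) ≫ P δ = η a₂ ≫ P (a₁ + δ)
    have key : ∀ δ : ℝ, 0 < δ → η (a₁ + a₂) ≫ P δ = η a₂ ≫ P (a₁ + δ) := by
      intro δ hδ
      have h1 : η (a₁ + a₂) ≫ P δ = η (δ/2) ≫ P (δ/2 + (a₁ + a₂)) := by
        have := hE (a₁ + a₂) (δ/2) (δ/2) (by positivity) (by positivity) (by positivity)
        rw [show δ/2 + δ/2 = δ by ring] at this
        exact this
      have h2 : η (δ/2) ≫ P ((δ/2 + a₁) + a₂) = η a₂ ≫ P ((δ/2 + a₁) + δ/2) :=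
        hE (δ/2) (δ/2 + a₁) a₂ (by positivity) (by positivity) h₂
      rw [h1, show δ/2 + (a₁ + a₂) = (δ/2 + a₁) + a₂ by ring, h2,
        show (δ/2 + a₁) + δ/2 = a₁ + δ by ring]
    -- take δ → 0⁺
    have hPa₁ : ContinuousAt P a₁ :=
      hPcont.continuousAt (Ioi_mem_nhds h₁)
    have t1 : Filter.Tendsto (fun δ => η (a₁ + a₂) ≫ P δ) (nhdsWithin 0 (Set.Ioi 0))
        (nhds (η (a₁ + a₂) ≫ 𝟙 A)) :=
      ((hcomp₁ (η (a₁ + a₂))).tendsto _).comp hPlim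
    have t2 : Filter.Tendsto (fun δ => η a₂ ≫ P (a₁ + δ)) (nhdsWithin 0 (Set.Ioi 0))
        (nhds (η a₂ ≫ P a₁)) := by
      have ha : Filter.Tendsto (fun δ : ℝ => a₁ + δ) (nhdsWithin 0 (Set.Ioi 0)) (nhds a₁) := by
        have : Filter.Tendsto (fun δ : ℝ => a₁ + δ) (nhds 0) (nhds (a₁ + 0)) :=
          (continuous_const.add continuous_id).tendsto 0
        rw [add_zero] at this
        exact this.mono_left nhdsWithin_le_nhds
      exact ((hcomp₁ (η a₂)).tendsto _).comp (hPa₁.tendsto.comp ha)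
    have heq : (fun δ => η (a₁ + a₂) ≫ P δ) =ᶠ[nhdsWithin 0 (Set.Ioi 0)]
        (fun δ => η a₂ ≫ P (a₁ + δ)) := by
      filter_upwards [self_mem_nhdsWithin] with δ hδ
      exact key δ hδ
    have := tendsto_nhds_unique (t1.congr' heq) t2
    rw [Category.comp_id] at this
    exact this.symm
  intro a₁ a₂ h₁ h₂
  refine ⟨hpart1 a₁ a₂ h₁ h₂, ?_⟩
  -- Part 2
  have h₁2 : (0:ℝ) < a₁/2 := by positivity
  have h₂2 : (0:ℝ) < a₂/2 := by positivity
  have e₁ : P a₁ = (ρ_ A).inv ≫ (A ◁ η (a₁/2)) ≫ μ (a₁/2) := by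
    rw [← hP (a₁/2) (a₁/2) h₁2 h₁2]; ring_nf
  have e₂ : P a₂ = (ρ_ A).inv ≫ (A ◁ η (a₂/2)) ≫ μ (a₂/2) := by
    rw [← hP (a₂/2) (a₂/2) h₂2 h₂2]; ring_nf
  have hass : (μ (a₂/2) ▷ A) ≫ μ (a₁/2) =
      (α_ A A A).hom ≫ (A ◁ μ (a₂/2)) ≫ μ (a₁/2) := by
    rw [hassoc (a₁/2) (a₂/2) (a₁/2) (a₂/2) h₁2 h₂2 h₁2 h₂2 rfl,
      Iso.hom_inv_id_assoc]
  have inner : η (a₂/2) ≫ (ρ_ A).inv ≫ (A ◁ η (a₁/2)) ≫ μ (a₂/2)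
      = η (a₂/2 + a₁/2 + a₂/2) := by
    rw [← hP (a₂/2) (a₁/2) h₂2 h₁2, hpart1 (a₂/2 + a₁/2) (a₂/2) (by positivity) h₂2]
  calc P a₂ ≫ P a₁
      = (ρ_ A).inv ≫ (A ◁ η (a₂/2)) ≫ μ (a₂/2) ≫ (ρ_ A).inv ≫ (A ◁ η (a₁/2))
        ≫ μ (a₁/2) := by rw [e₁, e₂]; simp only [Category.assoc]
    _ = (ρ_ A).inv ≫ (A ◁ η (a₂/2)) ≫ (ρ_ (A ⊗ A)).inv ≫ (μ (a₂/2) ▷ 𝟙_ C)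
        ≫ (A ◁ η (a₁/2)) ≫ μ (a₁/2) := by rw [rightUnitor_inv_naturality_assoc]
    _ = (ρ_ A).inv ≫ (A ◁ η (a₂/2)) ≫ (ρ_ (A ⊗ A)).inv ≫ ((A ⊗ A) ◁ η (a₁/2))
        ≫ (μ (a₂/2) ▷ A) ≫ μ (a₁/2) := by rw [← whisker_exchange_assoc]
    _ = (ρ_ A).inv ≫ (A ◁ η (a₂/2)) ≫ (ρ_ (A ⊗ A)).inv ≫ ((A ⊗ A) ◁ η (a₁/2))
        ≫ (α_ A A A).hom ≫ (A ◁ μ (a₂/2)) ≫ μ (a₁/2) := by rw [hass]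
    _ = (ρ_ A).inv ≫ (A ◁ η (a₂/2)) ≫ (ρ_ (A ⊗ A)).inv ≫ (α_ A A (𝟙_ C)).hom
        ≫ (A ◁ (A ◁ η (a₁/2))) ≫ (A ◁ μ (a₂/2)) ≫ μ (a₁/2) := by
          rw [associator_naturality_right_assoc]
    _ = (ρ_ A).inv ≫ (A ◁ η (a₂/2)) ≫ (A ◁ (ρ_ A).inv)
        ≫ (A ◁ (A ◁ η (a₁/2))) ≫ (A ◁ μ (a₂/2)) ≫ μ (a₁/2) := by
          rw [rightUnitor_tensor_inv, Category.assoc, Iso.inv_hom_id_assoc]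
    _ = (ρ_ A).inv ≫ (A ◁ (η (a₂/2) ≫ (ρ_ A).inv ≫ (A ◁ η (a₁/2)) ≫ μ (a₂/2)))
        ≫ μ (a₁/2) := by
          simp only [MonoidalCategory.whiskerLeft_comp, Category.assoc]
    _ = (ρ_ A).inv ≫ (A ◁ η (a₂/2 + a₁/2 + a₂/2)) ≫ μ (a₁/2) := by rw [inner]
    _ = P (a₁/2 + (a₂/2 + a₁/2 + a₂/2)) := (hP (a₁/2) _ h₁2 (by positivity)).symm
    _ = P (a₁ + a₂) := by ring_nf
end

section
/- Let A be a regularised algebra. Then P_{a₁} ∘ μ_{a₂} = μ_{b₁} ∘ (P_{b₂} ⊗ id_A) = μ_{c₁} ∘ (id_A ⊗ P_{c₂}) = μ_{a₁+a₂} whenever a₁+a₂ = b₁+b₂ = c₁+c₂; in particular μ_a depends only on the total area and a ↦ μ_a is continuous. -/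
/-!
Split a common piece of area `s` off the unit inside `P`: writing
`P_a = μ_{a-s} ∘ (η_s ⊗ id)` on either side, each identity becomes an instance of area-additive
associativity. Hence `μ_{a₂} ≫ P_{a₁}` depends only on `a₁ + a₂`, so
`μ_{a₁+a₂} ≫ P_ε = μ_{a₂} ≫ P_{a₁+ε}`, and letting `ε → 0` gives `μ_{a₁+a₂} = μ_{a₂} ≫ P_{a₁}`.
Continuity of `μ` then follows from `μ_x = μ_c ≫ P_{x-c}` for `x > c`.
-/

open CategoryTheory MonoidalCategory Filter Topology Set

section Monoidal

variable {C : Type*} [Category C] [MonoidalCategory C]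

theorem comp_leftUnitor_inv_whiskerRight_comp {W X Y Z U V : C} (f : X ⊗ Y ⟶ Z)
    (e : 𝟙_ C ⟶ W) (m : W ⊗ Z ⟶ V) (n : W ⊗ X ⟶ U) (m' : U ⊗ Y ⟶ V)
    (h : (W ◁ f) ≫ m = (α_ W X Y).inv ≫ (n ▷ Y) ≫ m') :
    f ≫ (λ_ Z).inv ≫ (e ▷ Z) ≫ m = (((λ_ X).inv ≫ (e ▷ X) ≫ n) ▷ Y) ≫ m' := by
  calc f ≫ (λ_ Z).inv ≫ (e ▷ Z) ≫ m
      = (λ_ (X ⊗ Y)).inv ≫ (e ▷ (X ⊗ Y)) ≫ (W ◁ f) ≫ m := by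
        rw [leftUnitor_inv_naturality_assoc, whisker_exchange_assoc]
    _ = _ := by rw [h]; simp

theorem comp_rightUnitor_inv_whiskerLeft_comp {W X Y Z U V : C} (f : X ⊗ Y ⟶ Z)
    (e : 𝟙_ C ⟶ W) (m : Z ⊗ W ⟶ V) (n : Y ⊗ W ⟶ U) (m' : X ⊗ U ⟶ V)
    (h : (f ▷ W) ≫ m = (α_ X Y W).hom ≫ (X ◁ n) ≫ m') :
    f ≫ (ρ_ Z).inv ≫ (Z ◁ e) ≫ m = (X ◁ ((ρ_ Y).inv ≫ (Y ◁ e) ≫ n)) ≫ m' := by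
  calc f ≫ (ρ_ Z).inv ≫ (Z ◁ e) ≫ m
      = (ρ_ (X ⊗ Y)).inv ≫ ((X ⊗ Y) ◁ e) ≫ (f ▷ W) ≫ m := by
        rw [rightUnitor_inv_naturality_assoc, whisker_exchange_assoc]
    _ = _ := by rw [h]; simp

end Monoidal

section RegularisedAlgebra

variable {C : Type*} [Category C] [MonoidalCategory C] {A : C}
  {μ : ℝ → (A ⊗ A ⟶ A)} {η : ℝ → (𝟙_ C ⟶ A)} {P : ℝ → (A ⟶ A)}

theorem comp_P_eq_P_whiskerRight_comp
    (hP : ∀ a₁ a₂ : ℝ, 0 < a₁ → 0 < a₂ → P (a₁ + a₂) = (λ_ A).inv ≫ (η a₂ ▷ A) ≫ μ a₁)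
    (hassoc : ∀ a₁ a₂ b₁ b₂ : ℝ, 0 < a₁ → 0 < a₂ → 0 < b₁ → 0 < b₂ → a₁ + a₂ = b₁ + b₂ →
      (A ◁ μ a₂) ≫ μ a₁ = (α_ A A A).inv ≫ (μ b₂ ▷ A) ≫ μ b₁)
    {a₁ a₂ b₁ b₂ : ℝ} (ha₁ : 0 < a₁) (ha₂ : 0 < a₂) (hb₁ : 0 < b₁) (hb₂ : 0 < b₂)
    (hsum : a₁ + a₂ = b₁ + b₂) :
    μ a₂ ≫ P a₁ = (P b₂ ▷ A) ≫ μ b₁ := by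
  obtain ⟨s, hs, hsab⟩ := exists_between (lt_min ha₁ hb₂)
  obtain ⟨hsa, hsb⟩ := lt_min_iff.mp hsab
  have hPa := hP (a₁ - s) s (sub_pos.mpr hsa) hs
  have hPb := hP (b₂ - s) s (sub_pos.mpr hsb) hs
  rw [sub_add_cancel] at hPa hPb
  rw [hPa, hPb]
  exact comp_leftUnitor_inv_whiskerRight_comp _ _ _ _ _
    (hassoc _ _ _ _ (sub_pos.mpr hsa) ha₂ hb₁ (sub_pos.mpr hsb) (by linarith))

theorem comp_P_eq_whiskerLeft_P_comp
    (hP : ∀ a₁ a₂ : ℝ, 0 < a₁ → 0 < a₂ → P (a₁ + a₂) = (ρ_ A).inv ≫ (A ◁ η a₂) ≫ μ a₁)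
    (hassoc : ∀ a₁ a₂ b₁ b₂ : ℝ, 0 < a₁ → 0 < a₂ → 0 < b₁ → 0 < b₂ → a₁ + a₂ = b₁ + b₂ →
      (A ◁ μ a₂) ≫ μ a₁ = (α_ A A A).inv ≫ (μ b₂ ▷ A) ≫ μ b₁)
    {a₁ a₂ c₁ c₂ : ℝ} (ha₁ : 0 < a₁) (ha₂ : 0 < a₂) (hc₁ : 0 < c₁) (hc₂ : 0 < c₂)
    (hsum : a₁ + a₂ = c₁ + c₂) :
    μ a₂ ≫ P a₁ = (A ◁ P c₂) ≫ μ c₁ := by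
  obtain ⟨s, hs, hsac⟩ := exists_between (lt_min ha₁ hc₂)
  obtain ⟨hsa, hsc⟩ := lt_min_iff.mp hsac
  have hPa := hP (a₁ - s) s (sub_pos.mpr hsa) hs
  have hPc := hP (c₂ - s) s (sub_pos.mpr hsc) hs
  rw [sub_add_cancel] at hPa hPc
  rw [hPa, hPc]
  refine comp_rightUnitor_inv_whiskerLeft_comp _ _ _ _ _ ?_
  rw [hassoc _ _ _ _ hc₁ (sub_pos.mpr hsc) (sub_pos.mpr hsa) ha₂ (by linarith),
    Iso.hom_inv_id_assoc]

variable [TopologicalSpace (A ⟶ A)] [TopologicalSpace (A ⊗ A ⟶ A)]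

theorem mu_add_eq_comp_P [T2Space (A ⊗ A ⟶ A)]
    (hcomp : ∀ f : A ⊗ A ⟶ A, Continuous fun g : A ⟶ A => f ≫ g)
    (hPcont : ContinuousOn P (Ioi 0)) (hPlim : Tendsto P (𝓝[>] 0) (𝓝 (𝟙 A)))
    (harea : ∀ a₁ a₂ b₁ b₂ : ℝ, 0 < a₁ → 0 < a₂ → 0 < b₁ → 0 < b₂ → a₁ + a₂ = b₁ + b₂ →
      μ a₂ ≫ P a₁ = μ b₂ ≫ P b₁)
    {a₁ a₂ : ℝ} (ha₁ : 0 < a₁) (ha₂ : 0 < a₂) :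
    μ (a₁ + a₂) = μ a₂ ≫ P a₁ := by
  have hlim : Tendsto (fun ε => μ (a₁ + a₂) ≫ P ε) (𝓝[>] 0) (𝓝 (μ (a₁ + a₂))) := by
    simpa [Function.comp_def] using ((hcomp _).tendsto (𝟙 A)).comp hPlim
  have hshift : Tendsto (fun ε : ℝ => a₁ + ε) (𝓝[>] 0) (𝓝 a₁) :=
    ((continuous_const.add continuous_id).tendsto' 0 a₁ (add_zero a₁)).mono_left
      nhdsWithin_le_nhds
  have hlim' : Tendsto (fun ε => μ a₂ ≫ P (a₁ + ε)) (𝓝[>] 0) (𝓝 (μ a₂ ≫ P a₁)) :=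
    ((hcomp _).tendsto _).comp
      ((hPcont.continuousAt (Ioi_mem_nhds ha₁)).tendsto.comp hshift)
  refine tendsto_nhds_unique hlim (hlim'.congr' ?_)
  filter_upwards [self_mem_nhdsWithin] with ε (hε : 0 < ε)
  exact harea _ _ _ _ (by linarith) ha₂ hε (by linarith) (by ring)

theorem continuousOn_mu
    (hcomp : ∀ f : A ⊗ A ⟶ A, Continuous fun g : A ⟶ A => f ≫ g)
    (hPcont : ContinuousOn P (Ioi 0))
    (hμ : ∀ a₁ a₂ : ℝ, 0 < a₁ → 0 < a₂ → μ (a₁ + a₂) = μ a₂ ≫ P a₁) :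
    ContinuousOn μ (Ioi 0) := by
  intro T (hT : 0 < T)
  have hT₂ : 0 < T / 2 := half_pos hT
  have hshift : ContinuousOn (fun x => μ (T / 2) ≫ P (x - T / 2)) (Ioi (T / 2)) :=
    (hcomp _).comp_continuousOn <| hPcont.comp (continuousOn_id.sub continuousOn_const)
      fun x (hx : T / 2 < x) => sub_pos.mpr hx
  have heq : EqOn μ (fun x => μ (T / 2) ≫ P (x - T / 2)) (Ioi (T / 2)) :=
    fun x (hx : T / 2 < x) => by simpa using hμ (x - T / 2) (T / 2) (sub_pos.mpr hx) hT₂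
  exact ((hshift.congr heq).continuousAt (Ioi_mem_nhds (half_lt_self hT))).continuousWithinAt

end RegularisedAlgebra

/-- In a regularised algebra,
`P_{a₁} ∘ μ_{a₂} = μ_{b₁} ∘ (P_{b₂} ⊗ id) = μ_{c₁} ∘ (id ⊗ P_{c₂}) = μ_{a₁+a₂}`
whenever `a₁+a₂ = b₁+b₂ = c₁+c₂`; in particular `μ_a` depends only on the total area
and `a ↦ μ_a` is continuous. -/
theorem stmt2 {C : Type*} [Category C] [MonoidalCategory C]
    [∀ X Y : C, TopologicalSpace (X ⟶ Y)] [∀ X Y : C, T2Space (X ⟶ Y)]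
    (hcomp₁ : ∀ {X Y Z : C} (f : X ⟶ Y), Continuous fun g : Y ⟶ Z => f ≫ g)
    (hcomp₂ : ∀ {X Y Z : C} (g : Y ⟶ Z), Continuous fun f : X ⟶ Y => f ≫ g)
    (A : C) (μ : ℝ → ((A ⊗ A) ⟶ A)) (η : ℝ → (𝟙_ C ⟶ A)) (P : ℝ → (A ⟶ A))
    (hunit : ∀ a₁ a₂ b₁ b₂ : ℝ, 0 < a₁ → 0 < a₂ → 0 < b₁ → 0 < b₂ → a₁ + a₂ = b₁ + b₂ →
      (ρ_ A).inv ≫ (A ◁ η a₂) ≫ μ a₁ = (λ_ A).inv ≫ (η b₂ ▷ A) ≫ μ b₁)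
    (hassoc : ∀ a₁ a₂ b₁ b₂ : ℝ, 0 < a₁ → 0 < a₂ → 0 < b₁ → 0 < b₂ → a₁ + a₂ = b₁ + b₂ →
      (A ◁ μ a₂) ≫ μ a₁ = (α_ A A A).inv ≫ (μ b₂ ▷ A) ≫ μ b₁)
    (hP : ∀ a₁ a₂ : ℝ, 0 < a₁ → 0 < a₂ →
      P (a₁ + a₂) = (ρ_ A).inv ≫ (A ◁ η a₂) ≫ μ a₁)
    (hPcont : ContinuousOn P (Set.Ioi 0))
    (hPlim : Filter.Tendsto P (nhdsWithin 0 (Set.Ioi 0)) (nhds (𝟙 A))) :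
    (∀ a₁ a₂ b₁ b₂ c₁ c₂ : ℝ, 0 < a₁ → 0 < a₂ → 0 < b₁ → 0 < b₂ → 0 < c₁ → 0 < c₂ →
      a₁ + a₂ = b₁ + b₂ → b₁ + b₂ = c₁ + c₂ →
      μ a₂ ≫ P a₁ = (P b₂ ▷ A) ≫ μ b₁ ∧
      (P b₂ ▷ A) ≫ μ b₁ = (A ◁ P c₂) ≫ μ c₁ ∧
      (A ◁ P c₂) ≫ μ c₁ = μ (a₁ + a₂)) ∧
    ContinuousOn μ (Set.Ioi 0) := by
  have hPleft : ∀ a₁ a₂ : ℝ, 0 < a₁ → 0 < a₂ → P (a₁ + a₂) = (λ_ A).inv ≫ (η a₂ ▷ A) ≫ μ a₁ :=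
    fun a₁ a₂ h₁ h₂ => (hP a₁ a₂ h₁ h₂).trans (hunit a₁ a₂ a₁ a₂ h₁ h₂ h₁ h₂ rfl)
  have harea : ∀ a₁ a₂ b₁ b₂ : ℝ, 0 < a₁ → 0 < a₂ → 0 < b₁ → 0 < b₂ → a₁ + a₂ = b₁ + b₂ →
      μ a₂ ≫ P a₁ = μ b₂ ≫ P b₁ := fun a₁ a₂ b₁ b₂ ha₁ ha₂ hb₁ hb₂ hsum =>
    (comp_P_eq_P_whiskerRight_comp hPleft hassoc ha₁ ha₂ ha₂ ha₁ (add_comm a₁ a₂)).trans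
      (comp_P_eq_P_whiskerRight_comp hPleft hassoc hb₁ hb₂ ha₂ ha₁ (by linarith)).symm
  have hμ : ∀ a₁ a₂ : ℝ, 0 < a₁ → 0 < a₂ → μ (a₁ + a₂) = μ a₂ ≫ P a₁ :=
    fun _ _ => mu_add_eq_comp_P hcomp₁ hPcont hPlim harea
  refine ⟨fun a₁ a₂ b₁ b₂ c₁ c₂ ha₁ ha₂ hb₁ hb₂ hc₁ hc₂ hab hbc => ?_,
    continuousOn_mu hcomp₁ hPcont hμ⟩
  have hleft := comp_P_eq_P_whiskerRight_comp hPleft hassoc ha₁ ha₂ hb₁ hb₂ hab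
  have hright := comp_P_eq_whiskerLeft_P_comp hP hassoc ha₁ ha₂ hc₁ hc₂ (hab.trans hbc)
  exact ⟨hleft, hleft.symm.trans hright, hright.symm.trans (hμ a₁ a₂ ha₁ ha₂).symm⟩
end

section
/- In a regularised Frobenius algebra A, the semigroup P_a defined from the algebra structure (P_a = μ_{a₁}∘(id⊗η_{a₂})) coincides with the semigroup P'_a defined from the coalgebra structure (P'_a = (id⊗ε_{a₂})∘Δ_{a₁}) for all a > 0. -/
open CategoryTheory MonoidalCategory

/-- In a regularised Frobenius algebra the semigroup `P_a` from the algebra structure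
coincides with the semigroup `P'_a` from the coalgebra structure. -/
theorem stmt4 {C : Type*} [Category C] [MonoidalCategory C]
    [∀ X Y : C, TopologicalSpace (X ⟶ Y)] [∀ X Y : C, T2Space (X ⟶ Y)]
    (hcomp₁ : ∀ {X Y Z : C} (f : X ⟶ Y), Continuous fun g : Y ⟶ Z => f ≫ g)
    (hcomp₂ : ∀ {X Y Z : C} (g : Y ⟶ Z), Continuous fun f : X ⟶ Y => f ≫ g)
    (A : C) (μ : ℝ → ((A ⊗ A) ⟶ A)) (η : ℝ → (𝟙_ C ⟶ A))
    (Δ : ℝ → (A ⟶ A ⊗ A)) (ε : ℝ → (A ⟶ 𝟙_ C))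
    (P P' : ℝ → (A ⟶ A))
    -- regularised algebra structure
    (hunit : ∀ a₁ a₂ b₁ b₂ : ℝ, 0 < a₁ → 0 < a₂ → 0 < b₁ → 0 < b₂ → a₁ + a₂ = b₁ + b₂ →
      (ρ_ A).inv ≫ (A ◁ η a₂) ≫ μ a₁ = (λ_ A).inv ≫ (η b₂ ▷ A) ≫ μ b₁)
    (hassoc : ∀ a₁ a₂ b₁ b₂ : ℝ, 0 < a₁ → 0 < a₂ → 0 < b₁ → 0 < b₂ → a₁ + a₂ = b₁ + b₂ →
      (A ◁ μ a₂) ≫ μ a₁ = (α_ A A A).inv ≫ (μ b₂ ▷ A) ≫ μ b₁)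
    (hP : ∀ a₁ a₂ : ℝ, 0 < a₁ → 0 < a₂ →
      P (a₁ + a₂) = (ρ_ A).inv ≫ (A ◁ η a₂) ≫ μ a₁)
    (hPcont : ContinuousOn P (Set.Ioi 0))
    (hPlim : Filter.Tendsto P (nhdsWithin 0 (Set.Ioi 0)) (nhds (𝟙 A)))
    -- regularised coalgebra structure
    (hcounit : ∀ a₁ a₂ b₁ b₂ : ℝ, 0 < a₁ → 0 < a₂ → 0 < b₁ → 0 < b₂ → a₁ + a₂ = b₁ + b₂ →
      Δ a₁ ≫ (A ◁ ε a₂) ≫ (ρ_ A).hom = Δ b₁ ≫ (ε b₂ ▷ A) ≫ (λ_ A).hom)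
    (hcoassoc : ∀ a₁ a₂ b₁ b₂ : ℝ, 0 < a₁ → 0 < a₂ → 0 < b₁ → 0 < b₂ → a₁ + a₂ = b₁ + b₂ →
      Δ a₁ ≫ (A ◁ Δ a₂) = Δ b₁ ≫ (Δ b₂ ▷ A) ≫ (α_ A A A).hom)
    (hP' : ∀ a₁ a₂ : ℝ, 0 < a₁ → 0 < a₂ →
      P' (a₁ + a₂) = Δ a₁ ≫ (A ◁ ε a₂) ≫ (ρ_ A).hom)
    (hP'cont : ContinuousOn P' (Set.Ioi 0))
    (hP'lim : Filter.Tendsto P' (nhdsWithin 0 (Set.Ioi 0)) (nhds (𝟙 A)))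
    -- Frobenius relation
    (hfrob : ∀ a₁ a₂ b₁ b₂ c₁ c₂ : ℝ, 0 < a₁ → 0 < a₂ → 0 < b₁ → 0 < b₂ → 0 < c₁ → 0 < c₂ →
      a₁ + a₂ = b₁ + b₂ → b₁ + b₂ = c₁ + c₂ →
      (Δ a₂ ▷ A) ≫ (α_ A A A).hom ≫ (A ◁ μ a₁) = μ b₂ ≫ Δ b₁ ∧
      μ b₂ ≫ Δ b₁ = (A ◁ Δ c₂) ≫ (α_ A A A).inv ≫ (μ c₁ ▷ A)) :
    ∀ a : ℝ, 0 < a → P a = P' a := by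

  intro a ha
  -- Step 1: μ s ≫ Δ t depends only on s + t
  have L1 : ∀ s t s' t' : ℝ, 0 < s → 0 < t → 0 < s' → 0 < t' → s + t = s' + t' →
      μ s ≫ Δ t = μ s' ≫ Δ t' := by
    intro s t s' t' hs ht hs' ht' h
    have h2 : 0 < (s + t) / 2 := by positivity
    have e1 := (hfrob ((s+t)/2) ((s+t)/2) t s ((s+t)/2) ((s+t)/2)
      h2 h2 ht hs h2 h2 (by ring) (by ring)).1
    have e2 := (hfrob ((s+t)/2) ((s+t)/2) t' s' ((s+t)/2) ((s+t)/2)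
      h2 h2 ht' hs' h2 h2 (by linarith) (by linarith)).1
    rw [← e1, e2]
  -- Step 2: area can be moved between P and P'
  have move : ∀ x₁ x₂ x₃ x₄ y₂ y₃ : ℝ, 0 < x₁ → 0 < x₂ → 0 < x₃ → 0 < x₄ →
      0 < y₂ → 0 < y₃ → x₂ + x₃ = y₂ + y₃ →
      P (x₂ + x₁) ≫ P' (x₃ + x₄) = P (y₂ + x₁) ≫ P' (y₃ + x₄) := by
    intro x₁ x₂ x₃ x₄ y₂ y₃ hx₁ hx₂ hx₃ hx₄ hy₂ hy₃ h
    rw [hP x₂ x₁ hx₂ hx₁, hP' x₃ x₄ hx₃ hx₄, hP y₂ x₁ hy₂ hx₁, hP' y₃ x₄ hy₃ hx₄]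
    slice_lhs 3 4 => rw [L1 x₂ x₃ y₂ y₃ hx₂ hx₃ hy₂ hy₃ h]
    simp only [Category.assoc]
  -- Step 3: P u ≫ P' v depends only on u + v (canonical midpoint form)
  have hmid : ∀ u v : ℝ, 0 < u → 0 < v →
      P u ≫ P' v = P ((u + v) / 2) ≫ P' ((u + v) / 2) := by
    intro u v hu hv
    have h2u : 0 < u / 2 := by positivity
    have h2v : 0 < v / 2 := by positivity
    have := move (u/2) (u/2) (v/2) (v/2) (v/2) (u/2) h2u h2u h2v h2v h2v h2u (by ring)
    rw [show u/2 + u/2 = u by ring, show v/2 + v/2 = v by ring,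
      show v/2 + u/2 = (u+v)/2 by ring, show u/2 + v/2 = (u+v)/2 by ring] at this
    exact this
  have hsym : ∀ t : ℝ, 0 < t → P a ≫ P' t = P t ≫ P' a := by
    intro t ht
    rw [hmid a t ha ht, hmid t a ht ha, show (t + a) / 2 = (a + t) / 2 by ring]
  -- Step 4: take the limit t → 0⁺
  have t1 : Filter.Tendsto (fun t => P a ≫ P' t) (nhdsWithin 0 (Set.Ioi 0))
      (nhds (P a ≫ 𝟙 A)) := ((hcomp₁ (P a)).tendsto (𝟙 A)).comp hP'lim
  have t2 : Filter.Tendsto (fun t => P t ≫ P' a) (nhdsWithin 0 (Set.Ioi 0))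
      (nhds (𝟙 A ≫ P' a)) := ((hcomp₂ (P' a)).tendsto (𝟙 A)).comp hPlim
  have t1' : Filter.Tendsto (fun t => P a ≫ P' t) (nhdsWithin 0 (Set.Ioi 0))
      (nhds (𝟙 A ≫ P' a)) := by
    refine t2.congr' ?_
    filter_upwards [self_mem_nhdsWithin] with t ht
    exact (hsym t ht).symm
  have := tendsto_nhds_unique t1 t1'
  simpa using this
end

section
/- Let A be a Hilbert space carrying a regularised Frobenius algebra structure such that lim_{a→0} P_a = id_A holds in the operator-norm topology on B(A). Then A is finite dimensional. -/
/-- A regularised Frobenius algebra in `Hilb` whose semigroup `P_a` converges to the identity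
in the operator-norm topology is finite dimensional.  (For an RFA in `Hilb`, each `P_a`
(`a > 0`) is a one-parameter semigroup of trace class, hence compact, operators — this is
Lemma 2.16 of the paper — so the RFA structure is encoded here by these two consequences.
The topology on `A →L[ℂ] A` is the operator-norm topology, so the convergence hypothesis
is norm convergence.) -/
theorem stmt9 {A : Type*} [NormedAddCommGroup A] [InnerProductSpace ℂ A] [CompleteSpace A]
    (P : ℝ → (A →L[ℂ] A))
    (hsemi : ∀ a b : ℝ, 0 < a → 0 < b → (P a).comp (P b) = P (a + b))
    (hcompact : ∀ a : ℝ, 0 < a → IsCompactOperator (P a))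
    (hlim : Filter.Tendsto P (nhdsWithin 0 (Set.Ioi 0))
      (nhds (ContinuousLinearMap.id ℂ A))) :
    FiniteDimensional ℂ A := by
  -- Find `a > 0` with `‖1 - P a‖ < 1`.
  have h1 : ∀ᶠ a in nhdsWithin 0 (Set.Ioi 0),
      dist (P a) (ContinuousLinearMap.id ℂ A) < 1 :=
    hlim (Metric.ball_mem_nhds _ one_pos)
  obtain ⟨a, hd, ha⟩ := (h1.and self_mem_nhdsWithin).exists
  have hnorm : ‖(1 : A →L[ℂ] A) - P a‖ < 1 := by
    rw [dist_eq_norm] at hd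
    rwa [norm_sub_rev] at hd
  -- `P a` is a unit.
  have hu : IsUnit (P a) := by
    have := (Units.oneSub (1 - P a) hnorm).isUnit
    simpa using this
  obtain ⟨u, hu⟩ := hu
  -- identity is a compact operator
  have hid : IsCompactOperator (ContinuousLinearMap.id ℂ A) := by
    have hc := (hcompact a ha).comp_clm (↑u⁻¹ : A →L[ℂ] A)
    have : (fun x => P a ((↑u⁻¹ : A →L[ℂ] A) x)) = fun x : A => x := by
      funext x
      have : (↑u * ↑u⁻¹ : A →L[ℂ] A) = 1 := u.mul_inv
      have h2 := congrArg (fun T : A →L[ℂ] A => T x) this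
      simpa [hu, ContinuousLinearMap.mul_apply] using h2
    have hc2 : IsCompactOperator (fun x => P a ((↑u⁻¹ : A →L[ℂ] A) x)) := hc
    rw [this] at hc2
    exact hc2
  -- closed unit ball compact
  have hball : IsCompact (Metric.closedBall (0 : A) 1) := by
    have hid' : IsCompactOperator (⇑(LinearMap.id : A →ₗ[ℂ] A)) := hid
    have := hid'.isCompact_closure_image_closedBall (𝕜₁ := ℂ) (1 : ℝ)
    simpa [Set.image_id, IsClosed.closure_eq Metric.isClosed_closedBall] using this
  exact FiniteDimensional.of_isCompact_closedBall₀ ℂ one_pos hball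
end

section
/- Every morphism of regularised Frobenius algebras is both a monomorphism and an epimorphism. -/
open CategoryTheory MonoidalCategory

/-- A regularised Frobenius algebra in a monoidal category `C` whose hom-sets are
topological spaces. -/
structure RFAData (C : Type*) [Category C] [MonoidalCategory C]
    [∀ X Y : C, TopologicalSpace (X ⟶ Y)] where
  A : C
  μ : ℝ → ((A ⊗ A) ⟶ A)
  η : ℝ → (𝟙_ C ⟶ A)
  Δ : ℝ → (A ⟶ A ⊗ A)
  ε : ℝ → (A ⟶ 𝟙_ C)
  P : ℝ → (A ⟶ A)
  unit_rel : ∀ a₁ a₂ b₁ b₂ : ℝ, 0 < a₁ → 0 < a₂ → 0 < b₁ → 0 < b₂ → a₁ + a₂ = b₁ + b₂ →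
    (ρ_ A).inv ≫ (A ◁ η a₂) ≫ μ a₁ = (λ_ A).inv ≫ (η b₂ ▷ A) ≫ μ b₁
  assoc_rel : ∀ a₁ a₂ b₁ b₂ : ℝ, 0 < a₁ → 0 < a₂ → 0 < b₁ → 0 < b₂ → a₁ + a₂ = b₁ + b₂ →
    (A ◁ μ a₂) ≫ μ a₁ = (α_ A A A).inv ≫ (μ b₂ ▷ A) ≫ μ b₁
  P_def : ∀ a₁ a₂ : ℝ, 0 < a₁ → 0 < a₂ →
    P (a₁ + a₂) = (ρ_ A).inv ≫ (A ◁ η a₂) ≫ μ a₁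
  P_cont : ContinuousOn P (Set.Ioi 0)
  P_lim : Filter.Tendsto P (nhdsWithin 0 (Set.Ioi 0)) (nhds (𝟙 A))
  counit_rel : ∀ a₁ a₂ b₁ b₂ : ℝ, 0 < a₁ → 0 < a₂ → 0 < b₁ → 0 < b₂ → a₁ + a₂ = b₁ + b₂ →
    Δ a₁ ≫ (A ◁ ε a₂) ≫ (ρ_ A).hom = Δ b₁ ≫ (ε b₂ ▷ A) ≫ (λ_ A).hom
  coassoc_rel : ∀ a₁ a₂ b₁ b₂ : ℝ, 0 < a₁ → 0 < a₂ → 0 < b₁ → 0 < b₂ → a₁ + a₂ = b₁ + b₂ →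
    Δ a₁ ≫ (A ◁ Δ a₂) = Δ b₁ ≫ (Δ b₂ ▷ A) ≫ (α_ A A A).hom
  P'_def : ∀ a₁ a₂ : ℝ, 0 < a₁ → 0 < a₂ →
    P (a₁ + a₂) = Δ a₁ ≫ (A ◁ ε a₂) ≫ (ρ_ A).hom
  frob_rel : ∀ a₁ a₂ b₁ b₂ c₁ c₂ : ℝ, 0 < a₁ → 0 < a₂ → 0 < b₁ → 0 < b₂ → 0 < c₁ → 0 < c₂ →
    a₁ + a₂ = b₁ + b₂ → b₁ + b₂ = c₁ + c₂ →
    (Δ a₂ ▷ A) ≫ (α_ A A A).hom ≫ (A ◁ μ a₁) = μ b₂ ≫ Δ b₁ ∧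
    μ b₂ ≫ Δ b₁ = (A ◁ Δ c₂) ≫ (α_ A A A).inv ≫ (μ c₁ ▷ A)

/-!
A morphism `φ : F → G` has, for every `u, v > 0`, an approximate two-sided inverse `ψ`: feed
the copairing of `F` and the pairing of `G` through `φ` and bend the wires. Because `φ`
preserves the (co)pairings, `φ ≫ ψ` and `ψ ≫ φ` are the zig-zag composites of `F` and of `G`,
which the Frobenius relation identifies with `P u ≫ P v`. Letting `u, v → 0` turns these into
identities, so `φ` can be cancelled on either side.
-/

open Filter Topology

namespace CategoryTheory.MonoidalCategory

variable {C : Type*} [Category C] [MonoidalCategory C]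

def snake {X Y Z : C} (γ : 𝟙_ C ⟶ X ⊗ Y) (β : Y ⊗ Z ⟶ 𝟙_ C) : Z ⟶ X :=
  (λ_ Z).inv ≫ (γ ▷ Z) ≫ (α_ X Y Z).hom ≫ (X ◁ β) ≫ (ρ_ X).hom

theorem comp_snake {X Y Z Z' : C} (f : Z' ⟶ Z) (γ : 𝟙_ C ⟶ X ⊗ Y) (β : Y ⊗ Z ⟶ 𝟙_ C) :
    f ≫ snake γ β = snake γ (Y ◁ f ≫ β) := by
  simp only [snake, leftUnitor_inv_naturality_assoc, whisker_exchange_assoc,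
    associator_naturality_right_assoc, MonoidalCategory.whiskerLeft_comp_assoc]

theorem snake_comp {X X' Y Z : C} (γ : 𝟙_ C ⟶ X ⊗ Y) (β : Y ⊗ Z ⟶ 𝟙_ C) (f : X ⟶ X') :
    snake γ β ≫ f = snake (γ ≫ f ▷ Y) β := by
  simp only [snake, Category.assoc, ← rightUnitor_naturality, ← whisker_exchange_assoc,
    associator_naturality_left_assoc, comp_whiskerRight_assoc]

theorem snake_whiskerLeft {X Y Y' Z : C} (γ : 𝟙_ C ⟶ X ⊗ Y) (f : Y ⟶ Y')
    (β : Y' ⊗ Z ⟶ 𝟙_ C) : snake (γ ≫ X ◁ f) β = snake γ (f ▷ Z ≫ β) := by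
  simp only [snake, comp_whiskerRight_assoc, associator_naturality_middle_assoc,
    MonoidalCategory.whiskerLeft_comp_assoc]

end CategoryTheory.MonoidalCategory

theorem CategoryTheory.eq_of_eventually_comp_eq {C : Type*} [Category C]
    [∀ X Y : C, TopologicalSpace (X ⟶ Y)] {X Y : C} [T2Space (X ⟶ Y)] {ι : Type*}
    {l : Filter ι} [l.NeBot] {Q : ι → (Y ⟶ Y)} (hQ : Tendsto Q l (𝓝 (𝟙 Y)))
    (hcomp : ∀ f : X ⟶ Y, Continuous fun g : Y ⟶ Y => f ≫ g) {p q : X ⟶ Y}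
    (h : ∀ᶠ i in l, p ≫ Q i = q ≫ Q i) : p = q := by
  have hlim : ∀ f : X ⟶ Y, Tendsto (fun i => f ≫ Q i) l (𝓝 f) := fun f => by
    simpa [Function.comp_def] using ((hcomp f).tendsto (𝟙 Y)).comp hQ
  exact tendsto_nhds_unique (hlim p) ((hlim q).congr' (h.mono fun _ => Eq.symm))

theorem CategoryTheory.eq_of_eventually_eq_comp {C : Type*} [Category C]
    [∀ X Y : C, TopologicalSpace (X ⟶ Y)] {X Y : C} [T2Space (X ⟶ Y)] {ι : Type*}
    {l : Filter ι} [l.NeBot] {Q : ι → (X ⟶ X)} (hQ : Tendsto Q l (𝓝 (𝟙 X)))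
    (hcomp : ∀ g : X ⟶ Y, Continuous fun f : X ⟶ X => f ≫ g) {p q : X ⟶ Y}
    (h : ∀ᶠ i in l, Q i ≫ p = Q i ≫ q) : p = q := by
  have hlim : ∀ g : X ⟶ Y, Tendsto (fun i => Q i ≫ g) l (𝓝 g) := fun g => by
    simpa [Function.comp_def] using ((hcomp g).tendsto (𝟙 X)).comp hQ
  exact tendsto_nhds_unique (hlim p) ((hlim q).congr' (h.mono fun _ => Eq.symm))

namespace RFAData

variable {C : Type*} [Category C] [MonoidalCategory C] [∀ X Y : C, TopologicalSpace (X ⟶ Y)]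

/-- `γ_a = Δ_{a₁} ∘ η_{a₂}` -/
def copairing (F : RFAData C) (a₁ a₂ : ℝ) : 𝟙_ C ⟶ F.A ⊗ F.A := F.η a₂ ≫ F.Δ a₁

/-- `β_a = ε_{a₁} ∘ μ_{a₂}` -/
def pairing (F : RFAData C) (a₁ a₂ : ℝ) : F.A ⊗ F.A ⟶ 𝟙_ C := F.μ a₂ ≫ F.ε a₁

theorem P_add_eq_leftUnitor (F : RFAData C) {a₁ a₂ : ℝ} (h₁ : 0 < a₁) (h₂ : 0 < a₂) :
    F.P (a₁ + a₂) = (λ_ F.A).inv ≫ (F.η a₂ ▷ F.A) ≫ F.μ a₁ :=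
  (F.P_def a₁ a₂ h₁ h₂).trans (F.unit_rel a₁ a₂ a₁ a₂ h₁ h₂ h₁ h₂ rfl)

theorem snake_copairing_pairing (F : RFAData C) {u₁ u₂ v₁ v₂ : ℝ} (hu₁ : 0 < u₁)
    (hu₂ : 0 < u₂) (hv₁ : 0 < v₁) (hv₂ : 0 < v₂) :
    snake (F.copairing v₁ u₂) (F.pairing v₂ u₁) = F.P (u₁ + u₂) ≫ F.P (v₁ + v₂) := by
  have hfrob := (F.frob_rel u₁ v₁ v₁ u₁ v₁ u₁ hu₁ hv₁ hv₁ hu₁ hv₁ hu₁ (add_comm _ _) rfl).1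
  rw [F.P_add_eq_leftUnitor hu₁ hu₂, F.P'_def v₁ v₂ hv₁ hv₂]
  simp only [snake, copairing, pairing, comp_whiskerRight, MonoidalCategory.whiskerLeft_comp,
    Category.assoc]
  slice_lhs 3 5 => rw [hfrob]
  simp only [Category.assoc]

variable {F G : RFAData C} {φ : F.A ⟶ G.A}

theorem copairing_comp_tensorHom {a₁ a₂ : ℝ} (hη : F.η a₂ ≫ φ = G.η a₂)
    (hΔ : φ ≫ G.Δ a₁ = F.Δ a₁ ≫ (φ ⊗ₘ φ)) :
    F.copairing a₁ a₂ ≫ (φ ⊗ₘ φ) = G.copairing a₁ a₂ := by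
  rw [copairing, copairing, Category.assoc, ← hΔ, reassoc_of% hη]

theorem tensorHom_comp_pairing {a₁ a₂ : ℝ} (hμ : F.μ a₂ ≫ φ = (φ ⊗ₘ φ) ≫ G.μ a₂)
    (hε : φ ≫ G.ε a₁ = F.ε a₁) :
    (φ ⊗ₘ φ) ≫ G.pairing a₁ a₂ = F.pairing a₁ a₂ := by
  rw [pairing, pairing, ← reassoc_of% hμ, hε]

variable (φ) in
/-- `ψ_{u,v}`, with halved parameters so that `φ ≫ ψ = F.P u ≫ F.P v`. -/
noncomputable def approxInverse (u v : ℝ) : G.A ⟶ F.A :=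
  snake (F.copairing (v / 2) (u / 2)) (φ ▷ G.A ≫ G.pairing (v / 2) (u / 2))

theorem comp_approxInverse {u v : ℝ} (hu : 0 < u) (hv : 0 < v)
    (hμ : F.μ (u / 2) ≫ φ = (φ ⊗ₘ φ) ≫ G.μ (u / 2)) (hε : φ ≫ G.ε (v / 2) = F.ε (v / 2)) :
    φ ≫ approxInverse φ u v = F.P u ≫ F.P v := by
  rw [approxInverse, comp_snake, ← Category.assoc, ← MonoidalCategory.tensorHom_def',
    tensorHom_comp_pairing hμ hε,
    F.snake_copairing_pairing (half_pos hu) (half_pos hu) (half_pos hv) (half_pos hv),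
    add_halves, add_halves]

theorem approxInverse_comp {u v : ℝ} (hu : 0 < u) (hv : 0 < v)
    (hη : F.η (u / 2) ≫ φ = G.η (u / 2))
    (hΔ : φ ≫ G.Δ (v / 2) = F.Δ (v / 2) ≫ (φ ⊗ₘ φ)) :
    approxInverse φ u v ≫ φ = G.P u ≫ G.P v := by
  rw [approxInverse, snake_comp, ← snake_whiskerLeft, Category.assoc,
    ← MonoidalCategory.tensorHom_def,
    copairing_comp_tensorHom hη hΔ,
    G.snake_copairing_pairing (half_pos hu) (half_pos hu) (half_pos hv) (half_pos hv),
    add_halves, add_halves]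

end RFAData

/-- Every morphism of regularised Frobenius algebras is both a monomorphism and an
epimorphism. -/
theorem stmt11 {C : Type*} [Category C] [MonoidalCategory C]
    [∀ X Y : C, TopologicalSpace (X ⟶ Y)] [∀ X Y : C, T2Space (X ⟶ Y)]
    (hcomp₁ : ∀ {X Y Z : C} (f : X ⟶ Y), Continuous fun g : Y ⟶ Z => f ≫ g)
    (hcomp₂ : ∀ {X Y Z : C} (g : Y ⟶ Z), Continuous fun f : X ⟶ Y => f ≫ g)
    (F G : RFAData C) (φ : F.A ⟶ G.A)
    (hη : ∀ a : ℝ, 0 < a → F.η a ≫ φ = G.η a)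
    (hμ : ∀ a : ℝ, 0 < a → F.μ a ≫ φ = (φ ⊗ₘ φ) ≫ G.μ a)
    (hΔ : ∀ a : ℝ, 0 < a → φ ≫ G.Δ a = F.Δ a ≫ (φ ⊗ₘ φ))
    (hε : ∀ a : ℝ, 0 < a → φ ≫ G.ε a = F.ε a) :
    Mono φ ∧ Epi φ := by
  refine ⟨⟨fun f g hfg => ?_⟩, ⟨fun f g hfg => ?_⟩⟩
  · refine eq_of_eventually_comp_eq F.P_lim hcomp₁
      (eventually_nhdsWithin_of_forall fun u hu => ?_)
    refine eq_of_eventually_comp_eq F.P_lim hcomp₁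
      (eventually_nhdsWithin_of_forall fun v hv => ?_)
    have hψ := RFAData.comp_approxInverse hu hv (hμ _ (half_pos hu)) (hε _ (half_pos hv))
    rw [Category.assoc, Category.assoc, ← hψ, reassoc_of% hfg]
  · refine eq_of_eventually_eq_comp G.P_lim hcomp₂
      (eventually_nhdsWithin_of_forall fun v hv => ?_)
    refine eq_of_eventually_eq_comp G.P_lim hcomp₂
      (eventually_nhdsWithin_of_forall fun u hu => ?_)
    have hψ := RFAData.approxInverse_comp hu hv (hη _ (half_pos hu)) (hΔ _ (half_pos hv))
    rw [← Category.assoc, ← Category.assoc, ← hψ, Category.assoc, hfg, Category.assoc]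
end

section
/- Let ℂ_{ε,σ} and ℂ_{ε',σ'} be the one-dimensional Hermitian RFAs on ℂ determined by nonzero ε, ε' ∈ ℂ and σ, σ' ∈ ℝ. If φ : ℂ_{ε,σ} → ℂ_{ε',σ'} is a morphism of RFAs, then σ = σ' and φ(1) = ε/ε', which has modulus 1. -/
/-! The counit condition says `e^{-aσ'} ε' φ(1) = e^{-aσ} ε` for every `a > 0`; comparing `a = 1`
with `a = 2` forces `e^{-σ} = e^{-σ'}`, hence `σ = σ'` and `ε' φ(1) = ε`. The unit condition then
reads `φ(1) ε* = ε'*`, and taking norms in both identities gives `‖φ(1)‖² ‖ε‖ = ‖ε‖`. -/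

open Complex in
theorem eq_and_eq_of_forall_exp_mul_eq {σ σ' : ℝ} {α β : ℂ} (hβ : β ≠ 0)
    (h : ∀ a : ℝ, 0 < a → (Real.exp (-(a * σ')) : ℂ) * α = (Real.exp (-(a * σ)) : ℂ) * β) :
    σ = σ' ∧ α = β := by
  have exp_two_mul (s : ℝ) : (Real.exp (-(2 * s)) : ℂ) = (Real.exp (-(1 * s)) : ℂ) ^ 2 := by
    rw [← ofReal_pow, ← Real.exp_nat_mul]
    ring_nf
  have h₁ := h 1 one_pos
  have h₂ := h 2 two_pos
  rw [exp_two_mul, exp_two_mul] at h₂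
  set u : ℂ := (Real.exp (-(1 * σ)) : ℂ)
  set u' : ℂ := (Real.exp (-(1 * σ')) : ℂ)
  have hu : u ≠ 0 := ofReal_ne_zero.mpr (Real.exp_ne_zero _)
  have hu' : u' = u := by
    have : (u' - u) * (u * β) = 0 := by linear_combination h₂ - u' * h₁
    exact sub_eq_zero.mp ((mul_eq_zero.mp this).resolve_right (mul_ne_zero hu hβ))
  refine ⟨?_, mul_left_cancel₀ hu (hu' ▸ h₁)⟩
  have := Real.exp_injective (ofReal_inj.mp hu')
  linarith

theorem RCLike.norm_eq_one_of_mul_eq_of_mul_conj_eq {𝕜 : Type*} [RCLike 𝕜] {ε ε' z : 𝕜}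
    (hε : ε ≠ 0) (h₁ : ε' * z = ε) (h₂ : z * starRingEnd 𝕜 ε = starRingEnd 𝕜 ε') : ‖z‖ = 1 := by
  have n₁ := congrArg norm h₁
  have n₂ := congrArg norm h₂
  simp only [norm_mul, RCLike.norm_conj] at n₁ n₂
  have hsq : ‖z‖ ^ 2 * ‖ε‖ = 1 * ‖ε‖ := by linear_combination ‖z‖ * n₂ + n₁
  exact (pow_eq_one_iff_of_nonneg (norm_nonneg z) two_ne_zero).mp
    (mul_right_cancel₀ (norm_ne_zero_iff.mpr hε) hsq)

theorem stmt12_general (ε ε' z : ℂ) (hε : ε ≠ 0) (σ σ' : ℝ)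
    (hη : ∀ a : ℝ, 0 < a →
      z * ((Real.exp (-(a * σ)) : ℂ) * (starRingEnd ℂ) ε)
        = (Real.exp (-(a * σ')) : ℂ) * (starRingEnd ℂ) ε')
    (hcounit : ∀ a : ℝ, 0 < a →
      (Real.exp (-(a * σ')) : ℂ) * ε' * z = (Real.exp (-(a * σ)) : ℂ) * ε) :
    σ = σ' ∧ z = ε / ε' ∧ ‖z‖ = 1 := by
  obtain ⟨rfl, hεz⟩ := eq_and_eq_of_forall_exp_mul_eq (α := ε' * z) hε
    fun a ha ↦ by rw [← mul_assoc, hcounit a ha]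
  have hε' : ε' ≠ 0 := left_ne_zero_of_mul (hεz ▸ hε)
  have hconj : z * starRingEnd ℂ ε = starRingEnd ℂ ε' :=
    mul_left_cancel₀ (Complex.ofReal_ne_zero.mpr (Real.exp_ne_zero (-(1 * σ))))
      (by rw [← hη 1 one_pos]; ring)
  exact ⟨rfl, eq_div_of_mul_eq hε' (mul_comm ε' z ▸ hεz),
    RCLike.norm_eq_one_of_mul_eq_of_mul_conj_eq hε hεz hconj⟩

/-- Any morphism of regularised Frobenius algebras `φ : ℂ_{ε,σ} → ℂ_{ε',σ'}` between
one-dimensional Hermitian RFAs satisfies `σ = σ'` and `φ(1) = ε/ε'`, a number of modulus `1`.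
Here `φ` is identified with the scalar `z = φ(1)`, and the RFA morphism conditions
(compatibility with unit, counit, product and coproduct) are spelled out for the structure
maps `ε_a(1) = e^{-aσ}ε`, `η_a(1) = e^{-aσ}ε*`, `μ_a(1⊗1) = e^{-aσ}/ε*`,
`Δ_a(1) = (e^{-aσ}/ε)·1⊗1`. -/
theorem stmt12 (ε ε' z : ℂ) (hε : ε ≠ 0) (hε' : ε' ≠ 0) (σ σ' : ℝ)
    (hη : ∀ a : ℝ, 0 < a →
      z * ((Real.exp (-(a * σ)) : ℂ) * (starRingEnd ℂ) ε)
        = (Real.exp (-(a * σ')) : ℂ) * (starRingEnd ℂ) ε')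
    (hcounit : ∀ a : ℝ, 0 < a →
      (Real.exp (-(a * σ')) : ℂ) * ε' * z = (Real.exp (-(a * σ)) : ℂ) * ε)
    (hμ : ∀ a : ℝ, 0 < a →
      z * ((Real.exp (-(a * σ)) : ℂ) / (starRingEnd ℂ) ε)
        = ((Real.exp (-(a * σ')) : ℂ) / (starRingEnd ℂ) ε') * (z * z))
    (hΔ : ∀ a : ℝ, 0 < a →
      (z * z) * ((Real.exp (-(a * σ)) : ℂ) / ε)
        = ((Real.exp (-(a * σ')) : ℂ) / ε') * z) :
    σ = σ' ∧ z = ε / ε' ∧ ‖z‖ = 1 :=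
  stmt12_general ε ε' z hε σ σ' hη hcounit
end

section
/- Let F be a finite-dimensional complex Hilbert space with a Frobenius algebra structure (μ, η, Δ, ε) such that μ† = Δ and η† = ε (a †-Frobenius algebra). Set ζ := μ∘Δ : F → F. Then ζ is a self-adjoint F-F-bimodule morphism, ζ is injective (0 is not an eigenvalue), and the eigenspace decomposition F = ⊕_{α ∈ sp(ζ)} F_α is a decomposition of Frobenius algebras: for a ∈ F_α, b ∈ F_β with α ≠ β one has a·b = 0, and Δ(F_α) ⊆ F_α ⊗ F_α. Consequently F is a semisimple algebra. -/
/-!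
The form `B` makes `F` a Hilbert space, and the hypotheses on `B2` force it to be the inner
product of `F ⊗ F`, so `Δ = μ†`. Hence `ζ = μ μ†` is self-adjoint and, `μ` being surjective,
bijective. The Frobenius relations say that `Δ` is an `F`-bimodule map, hence so is `ζ`; this
makes eigenvectors of distinct eigenvalues multiply to zero, and taking adjoints in
`μ ∘ (ζ ⊗ id) = ζ ∘ μ` gives `(ζ ⊗ id) ∘ Δ = Δ ∘ ζ`. Finally `e = (ζ⁻¹ ⊗ id)(Δ 1)` is a
separability element (`μ e = 1` and `(a ⊗ 1) e = e (1 ⊗ a)`), and averaging a linear projection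
onto a left ideal against `e`, as in Maschke's theorem, yields an `F`-linear one.
-/

open scoped TensorProduct
open LinearMap TensorProduct

section Multiplication

variable {k A : Type*} [CommSemiring k] [Semiring A] [Algebra k A]

theorem mul'_comp_rTensor_of_map_mul {f : A →ₗ[k] A} (hf : ∀ a b, f (a * b) = f a * b) :
    mul' k A ∘ₗ rTensor A f = f ∘ₗ mul' k A :=
  TensorProduct.ext' fun a b => by simp [hf]

theorem mul'_comp_lTensor_of_map_mul {f : A →ₗ[k] A} (hf : ∀ a b, f (a * b) = a * f b) :
    mul' k A ∘ₗ lTensor A f = f ∘ₗ mul' k A :=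
  TensorProduct.ext' fun a b => by simp [hf]

theorem mul'_rTensor_mulLeft (a : A) (u : A ⊗[k] A) :
    mul' k A (rTensor A (mulLeft k a) u) = a * mul' k A u :=
  LinearMap.congr_fun (mul'_comp_rTensor_of_map_mul fun b c => by simp [mul_assoc]) u

theorem mul'_lTensor_mulRight (a : A) (u : A ⊗[k] A) :
    mul' k A (lTensor A (mulRight k a) u) = mul' k A u * a :=
  LinearMap.congr_fun (mul'_comp_lTensor_of_map_mul fun b c => by simp [mul_assoc]) u

variable {Δ : A →ₗ[k] A ⊗[k] A}

theorem map_mul_left_of_frobenius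
    (hfrob : rTensor A (mul' k A) ∘ₗ (TensorProduct.assoc k A A A).symm.toLinearMap ∘ₗ
      lTensor A Δ = Δ ∘ₗ mul' k A) (a x : A) :
    Δ (a * x) = rTensor A (mulLeft k a) (Δ x) := by
  have hassoc (u : A ⊗[k] A) :
      rTensor A (mul' k A) ((TensorProduct.assoc k A A A).symm (a ⊗ₜ u)) =
        rTensor A (mulLeft k a) u := by
    induction u using TensorProduct.induction_on with
    | zero => simp
    | tmul b c => simp
    | add u v hu hv => simp only [tmul_add, map_add, hu, hv]
  simpa [hassoc] using (LinearMap.congr_fun hfrob (a ⊗ₜ x)).symm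

theorem map_mul_right_of_frobenius
    (hfrob : lTensor A (mul' k A) ∘ₗ (TensorProduct.assoc k A A A).toLinearMap ∘ₗ
      rTensor A Δ = Δ ∘ₗ mul' k A) (a x : A) :
    Δ (x * a) = lTensor A (mulRight k a) (Δ x) := by
  have hassoc (u : A ⊗[k] A) :
      lTensor A (mul' k A) (TensorProduct.assoc k A A A (u ⊗ₜ a)) =
        lTensor A (mulRight k a) u := by
    induction u using TensorProduct.induction_on with
    | zero => simp
    | tmul b c => simp
    | add u v hu hv => simp only [add_tmul, map_add, hu, hv]
  simpa [hassoc] using (LinearMap.congr_fun hfrob (x ⊗ₜ a)).symm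

theorem mul'_map_mul_left (hΔ : ∀ a x, Δ (a * x) = rTensor A (mulLeft k a) (Δ x)) (a x : A) :
    mul' k A (Δ (a * x)) = a * mul' k A (Δ x) := by
  rw [hΔ, mul'_rTensor_mulLeft]

theorem mul'_map_mul_right (hΔ : ∀ a x, Δ (x * a) = lTensor A (mulRight k a) (Δ x)) (a x : A) :
    mul' k A (Δ (x * a)) = mul' k A (Δ x) * a := by
  rw [hΔ, mul'_lTensor_mulRight]

end Multiplication

theorem mul_eq_zero_of_apply_eq_smul {k A : Type*} [Field k] [Ring A] [Algebra k A]
    {f : A → A} (hl : ∀ a x, f (a * x) = a * f x) (hr : ∀ a x, f (x * a) = f x * a)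
    {α β : k} {x y : A} (hx : f x = α • x) (hy : f y = β • y)
    (hαβ : α ≠ β) : x * y = 0 := by
  have hα : f (x * y) = α • (x * y) := by rw [hr, hx, smul_mul_assoc]
  have hβ : f (x * y) = β • (x * y) := by rw [hl, hy, mul_smul_comm]
  have : (α - β) • (x * y) = 0 := by rw [sub_smul, ← hα, ← hβ, sub_self]
  exact (smul_eq_zero.mp this).resolve_left (sub_ne_zero.mpr hαβ)

section Separability

variable {k A : Type*} [CommRing k] [Ring A] [Algebra k A]

/-- For `e = ∑ eᵢ ⊗ fᵢ`, the map `x ↦ ∑ eᵢ * π (fᵢ * x)`. -/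
def separabilityAverage (e : A ⊗[k] A) (π : A →ₗ[k] A) (x : A) : A :=
  mul' k A (lTensor A (π ∘ₗ mulRight k x) e)

variable {e : A ⊗[k] A} {π : A →ₗ[k] A}

theorem separabilityAverage_add (x y : A) :
    separabilityAverage e π (x + y) = separabilityAverage e π x + separabilityAverage e π y := by
  have : π ∘ₗ mulRight k (x + y) = π ∘ₗ mulRight k x + π ∘ₗ mulRight k y := by
    ext; simp [mul_add]
  unfold separabilityAverage
  rw [this, lTensor_add, LinearMap.add_apply, map_add]

theorem separabilityAverage_mul
    (hbal : ∀ a : A, rTensor A (mulLeft k a) e = lTensor A (mulRight k a) e) (a x : A) :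
    separabilityAverage e π (a * x) = a * separabilityAverage e π x := by
  have : π ∘ₗ mulRight k (a * x) = (π ∘ₗ mulRight k x) ∘ₗ mulRight k a := by
    ext; simp [mul_assoc]
  unfold separabilityAverage
  rw [this, lTensor_comp_apply, ← hbal, ← comp_apply (lTensor A _), lTensor_comp_rTensor,
    ← rTensor_comp_lTensor, comp_apply, mul'_rTensor_mulLeft]

theorem separabilityAverage_mem {I : Submodule A A} (hπ : ∀ x, π x ∈ I) (x : A) :
    separabilityAverage e π x ∈ I := by
  induction e using TensorProduct.induction_on with
  | zero => simp [separabilityAverage]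
  | tmul p q => exact I.smul_mem p (hπ _)
  | add u v hu hv => simpa [separabilityAverage] using I.add_mem hu hv

theorem separabilityAverage_of_mem (he : mul' k A e = 1) {I : Submodule A A}
    (hπ : ∀ y ∈ I, π y = y) {x : A} (hx : x ∈ I) : separabilityAverage e π x = x := by
  have : π ∘ₗ mulRight k x = mulRight k x := by
    ext q; exact hπ _ (I.smul_mem q hx)
  rw [separabilityAverage, this, mul'_lTensor_mulRight, he, one_mul]

end Separability

theorem isSemisimpleRing_of_separabilityElement {k A : Type*} [Field k] [Ring A] [Algebra k A]
    {e : A ⊗[k] A} (he : mul' k A e = 1)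
    (hbal : ∀ a : A, rTensor A (mulLeft k a) e = lTensor A (mulRight k a) e) :
    IsSemisimpleRing A := by
  refine (isSemisimpleModule_iff ..).mpr ⟨fun I => ?_⟩
  let J := I.restrictScalars k
  let π := J.subtype ∘ₗ J.subtype.leftInverse
  have hπ (x : A) : π x ∈ I := (J.subtype.leftInverse x).2
  have hπ_of_mem (y : A) (hy : y ∈ I) : π y = y :=
    congrArg Subtype.val (leftInverse_apply_of_inj J.ker_subtype ⟨y, hy⟩)
  let T : A →ₗ[A] I :=
    { toFun x := ⟨separabilityAverage e π x, separabilityAverage_mem hπ x⟩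
      map_add' x y := Subtype.ext (separabilityAverage_add x y)
      map_smul' a x := Subtype.ext (separabilityAverage_mul hbal a x) }
  exact ⟨_, isCompl_of_proj (f := T) fun x =>
    Subtype.ext (separabilityAverage_of_mem he hπ_of_mem x.2)⟩

theorem isSemisimpleRing_of_bijective_mul'_comp {k A : Type*} [Field k] [Ring A] [Algebra k A]
    {Δ : A →ₗ[k] A ⊗[k] A} (hΔl : ∀ a x, Δ (a * x) = rTensor A (mulLeft k a) (Δ x))
    (hΔr : ∀ a x, Δ (x * a) = lTensor A (mulRight k a) (Δ x))
    (hζ : Function.Bijective (mul' k A ∘ₗ Δ)) : IsSemisimpleRing A := by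
  let ζ := LinearEquiv.ofBijective (mul' k A ∘ₗ Δ) hζ
  have hζ_symm_mulLeft (a : A) :
      mulLeft k a ∘ₗ ζ.symm.toLinearMap = ζ.symm.toLinearMap ∘ₗ mulLeft k a := by
    ext x
    apply ζ.injective
    change mul' k A (Δ (a * ζ.symm x)) = ζ (ζ.symm (a * x))
    rw [mul'_map_mul_left hΔl, ζ.apply_symm_apply]
    exact congrArg (a * ·) (ζ.apply_symm_apply x)
  have hζ_rTensor : mul' k A ∘ₗ rTensor A ζ.toLinearMap = ζ.toLinearMap ∘ₗ mul' k A :=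
    mul'_comp_rTensor_of_map_mul fun a b => mul'_map_mul_right hΔr b a
  refine isSemisimpleRing_of_separabilityElement (e := rTensor A ζ.symm.toLinearMap (Δ 1)) ?_ ?_
  · apply ζ.injective
    calc ζ (mul' k A (rTensor A ζ.symm.toLinearMap (Δ 1)))
        = mul' k A (rTensor A ζ.toLinearMap (rTensor A ζ.symm.toLinearMap (Δ 1))) :=
          (LinearMap.congr_fun hζ_rTensor _).symm
      _ = ζ 1 := by rw [← rTensor_comp_apply, ζ.comp_symm, rTensor_id, id_apply]; rfl
  · intro a
    calc rTensor A (mulLeft k a) (rTensor A ζ.symm.toLinearMap (Δ 1))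
        = rTensor A ζ.symm.toLinearMap (rTensor A (mulLeft k a) (Δ 1)) := by
          rw [← rTensor_comp_apply, hζ_symm_mulLeft, rTensor_comp_apply]
      _ = rTensor A ζ.symm.toLinearMap (lTensor A (mulRight k a) (Δ 1)) := by
          rw [← hΔl, ← hΔr, mul_one, one_mul]
      _ = lTensor A (mulRight k a) (rTensor A ζ.symm.toLinearMap (Δ 1)) := by
          rw [← comp_apply, rTensor_comp_lTensor, ← lTensor_comp_rTensor, comp_apply]

abbrev innerProductCoreOfForm {𝕜 V : Type*} [RCLike 𝕜] [AddCommGroup V] [Module 𝕜 V]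
    (B : V → V → 𝕜) (hlin : ∀ x, IsLinearMap 𝕜 (B x))
    (hconj : ∀ x y, B y x = starRingEnd 𝕜 (B x y)) (hpos : ∀ x, x ≠ 0 → 0 < RCLike.re (B x x)) :
    InnerProductSpace.Core 𝕜 V where
  inner := B
  conj_inner_symm x y := by rw [hconj x y, RCLike.conj_conj]
  re_inner_nonneg x := by
    rcases eq_or_ne x 0 with rfl | hx
    · simp [(hlin 0).map_zero]
    · exact (hpos x hx).le
  add_left x y z := by rw [hconj z, (hlin z).map_add, map_add, ← hconj, ← hconj]
  smul_left x y r := by rw [hconj y, (hlin y).map_smul, smul_eq_mul, map_mul, ← hconj]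
  definite x h := by
    by_contra hx
    simpa [h] using hpos x hx

section InnerProductSpace

variable {𝕜 E : Type*} [RCLike 𝕜] [NormedAddCommGroup E] [InnerProductSpace 𝕜 E]

theorem TensorProduct.eq_inner_of_tmul {G : Type*} [NormedAddCommGroup G]
    [InnerProductSpace 𝕜 G] {B : E ⊗[𝕜] G → E ⊗[𝕜] G → 𝕜} (hlin : ∀ u, IsLinearMap 𝕜 (B u))
    (hconj : ∀ u v, B v u = starRingEnd 𝕜 (B u v))
    (htmul : ∀ a b c d, B (a ⊗ₜ b) (c ⊗ₜ d) = inner 𝕜 a c * inner 𝕜 b d) (u v : E ⊗[𝕜] G) :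
    B u v = inner 𝕜 u v := by
  induction u using TensorProduct.induction_on with
  | zero => rw [hconj, (hlin v).map_zero, map_zero, inner_zero_left]
  | tmul a b =>
    induction v using TensorProduct.induction_on with
    | zero => rw [(hlin _).map_zero, inner_zero_right]
    | tmul c d => rw [htmul, inner_tmul]
    | add v w hv hw => rw [(hlin _).map_add, hv, hw, inner_add_right]
  | add u w hu hw =>
    rw [hconj, (hlin v).map_add, map_add, ← hconj, ← hconj, hu, hw, inner_add_left]

variable [FiniteDimensional 𝕜 E]

theorem rTensor_comp_adjoint_of_comp_rTensor {f : E →ₗ[𝕜] E} (hf : f.IsSymmetric)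
    {m : E ⊗[𝕜] E →ₗ[𝕜] E} (h : m ∘ₗ rTensor E f = f ∘ₗ m) :
    rTensor E f ∘ₗ adjoint m = adjoint m ∘ₗ f := by
  simpa [adjoint_comp, hf.adjoint_eq] using congrArg adjoint h

theorem lTensor_comp_adjoint_of_comp_lTensor {f : E →ₗ[𝕜] E} (hf : f.IsSymmetric)
    {m : E ⊗[𝕜] E →ₗ[𝕜] E} (h : m ∘ₗ lTensor E f = f ∘ₗ m) :
    lTensor E f ∘ₗ adjoint m = adjoint m ∘ₗ f := by
  simpa [adjoint_comp, hf.adjoint_eq] using congrArg adjoint h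

theorem bijective_self_comp_adjoint {m : E ⊗[𝕜] E →ₗ[𝕜] E} (hm : Function.Surjective m) :
    Function.Bijective (m ∘ₗ adjoint m) := by
  have hsurj : Function.Surjective (m ∘ₗ adjoint m) := by
    rw [← range_eq_top, range_self_comp_adjoint, range_eq_top]
    exact hm
  exact ⟨injective_iff_surjective.mpr hsurj, hsurj⟩

end InnerProductSpace

/-- Let `F` be a finite-dimensional †-Frobenius algebra in `Hilb`: a finite-dimensional
complex algebra with a positive-definite hermitian inner product `B` (and the induced
inner product `B2` on `F ⊗ F`), comultiplication `Δ` adjoint to the multiplication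
`μ = mul'`, satisfying the Frobenius relation.  Then `ζ := μ ∘ Δ` is a self-adjoint
`F`-`F`-bimodule morphism, `ζ` is injective, eigenvectors of `ζ` for distinct eigenvalues
multiply to zero, `Δ` maps each eigenspace `F_α` into `F_α ⊗ F_α`, and `F` is
semisimple. -/
theorem stmt13 {F : Type*} [Ring F] [Algebra ℂ F] [FiniteDimensional ℂ F]
    (B : F → F → ℂ)
    (hBlin : ∀ x : F, IsLinearMap ℂ (B x))
    (hBconj : ∀ x y : F, B y x = (starRingEnd ℂ) (B x y))
    (hBpos : ∀ x : F, x ≠ 0 → 0 < (B x x).re)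
    (B2 : (F ⊗[ℂ] F) → (F ⊗[ℂ] F) → ℂ)
    (hB2lin : ∀ u : F ⊗[ℂ] F, IsLinearMap ℂ (B2 u))
    (hB2conj : ∀ u v : F ⊗[ℂ] F, B2 v u = (starRingEnd ℂ) (B2 u v))
    (hB2elem : ∀ a b c d : F, B2 (a ⊗ₜ[ℂ] b) (c ⊗ₜ[ℂ] d) = B a c * B b d)
    (Δ : F →ₗ[ℂ] F ⊗[ℂ] F)
    (hΔadj : ∀ (x : F) (u : F ⊗[ℂ] F), B2 (Δ x) u = B x (LinearMap.mul' ℂ F u))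
    (hfrob₁ : (LinearMap.lTensor F (LinearMap.mul' ℂ F)).comp
        (((TensorProduct.assoc ℂ F F F).toLinearMap).comp (LinearMap.rTensor F Δ))
      = Δ.comp (LinearMap.mul' ℂ F))
    (hfrob₂ : (LinearMap.rTensor F (LinearMap.mul' ℂ F)).comp
        (((TensorProduct.assoc ℂ F F F).symm.toLinearMap).comp (LinearMap.lTensor F Δ))
      = Δ.comp (LinearMap.mul' ℂ F)) :
    (∀ x y : F, B ((LinearMap.mul' ℂ F) (Δ x)) y = B x ((LinearMap.mul' ℂ F) (Δ y))) ∧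
    (∀ a x : F, (LinearMap.mul' ℂ F) (Δ (a * x)) = a * (LinearMap.mul' ℂ F) (Δ x) ∧
      (LinearMap.mul' ℂ F) (Δ (x * a)) = (LinearMap.mul' ℂ F) (Δ x) * a) ∧
    Function.Injective (fun x : F => (LinearMap.mul' ℂ F) (Δ x)) ∧
    (∀ (α β : ℂ) (x y : F), (LinearMap.mul' ℂ F) (Δ x) = α • x →
      (LinearMap.mul' ℂ F) (Δ y) = β • y → α ≠ β → x * y = 0) ∧
    (∀ (α : ℂ) (x : F), (LinearMap.mul' ℂ F) (Δ x) = α • x →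
      LinearMap.rTensor F ((LinearMap.mul' ℂ F).comp Δ) (Δ x) = α • Δ x ∧
      LinearMap.lTensor F ((LinearMap.mul' ℂ F).comp Δ) (Δ x) = α • Δ x) ∧
    IsSemisimpleRing F := by
  let core := innerProductCoreOfForm B hBlin hBconj hBpos
  let _ : NormedAddCommGroup F := core.toNormedAddCommGroup
  let _ : InnerProductSpace ℂ F := .ofCore core.toCore
  have hB2 : B2 = inner ℂ := funext₂ (TensorProduct.eq_inner_of_tmul hB2lin hB2conj hB2elem)
  have hΔ : Δ = adjoint (mul' ℂ F) := (eq_adjoint_iff _ _).mpr fun x u => by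
    rw [← hB2]
    exact hΔadj x u
  have hΔl := map_mul_left_of_frobenius hfrob₂
  have hΔr := map_mul_right_of_frobenius hfrob₁
  have hζl := mul'_map_mul_left hΔl
  have hζr := mul'_map_mul_right hΔr
  have hζ : (mul' ℂ F ∘ₗ Δ).IsSymmetric := hΔ ▸ isSymmetric_self_comp_adjoint _
  have hζbij : Function.Bijective (mul' ℂ F ∘ₗ Δ) :=
    hΔ ▸ bijective_self_comp_adjoint fun x => ⟨x ⊗ₜ 1, by simp⟩
  have hΔζ_r : rTensor F (mul' ℂ F ∘ₗ Δ) ∘ₗ Δ = Δ ∘ₗ (mul' ℂ F ∘ₗ Δ) := by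
    have := rTensor_comp_adjoint_of_comp_rTensor hζ
      (mul'_comp_rTensor_of_map_mul fun a b => hζr b a)
    rwa [← hΔ] at this
  have hΔζ_l : lTensor F (mul' ℂ F ∘ₗ Δ) ∘ₗ Δ = Δ ∘ₗ (mul' ℂ F ∘ₗ Δ) := by
    have := lTensor_comp_adjoint_of_comp_lTensor hζ
      (mul'_comp_lTensor_of_map_mul hζl)
    rwa [← hΔ] at this
  have hΔ_eigen {T : F ⊗[ℂ] F →ₗ[ℂ] F ⊗[ℂ] F} (hT : T ∘ₗ Δ = Δ ∘ₗ (mul' ℂ F ∘ₗ Δ)) {α : ℂ}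
      {x : F} (hx : mul' ℂ F (Δ x) = α • x) : T (Δ x) = α • Δ x := by
    rw [← comp_apply, hT, comp_apply, comp_apply, hx, map_smul]
  exact ⟨hζ, fun a x => ⟨hζl a x, hζr a x⟩, hζbij.1,
    fun _ _ _ _ => mul_eq_zero_of_apply_eq_smul (f := fun x => mul' ℂ F (Δ x)) hζl hζr,
    fun _ _ hx => ⟨hΔ_eigen hΔζ_r hx, hΔ_eigen hΔζ_l hx⟩,
    isSemisimpleRing_of_bijective_mul'_comp hΔl hΔr hζbij⟩
end

section
/- Let (ε_k, σ_k)_{k∈I} be a countable family with ε_k ∈ ℂ∖{0}, σ_k ∈ ℂ, such that for all a > 0: sup_{k∈I} |ε_k e^{−aσ_k}| < ∞ and ∑_{k∈I} |e^{−aσ_k}/ε_k|² < ∞. Then the structure maps μ_a(f_k ⊗ f_j) := δ_{kj} ε_k e^{−aσ_k} f_k, η_a(1) := ∑_k (e^{−aσ_k}/ε_k) f_k, Δ_a(f_k) := (e^{−aσ_k}/ε_k) f_k ⊗ f_k, ε_a(f_k) := ε_k e^{−aσ_k} are all bounded operators on the Hilbert space A = ⊕_{k∈I} ℂf_k (orthonormal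 f_k), defining a commutative regularised Frobenius algebra with P_a(f_k) = e^{−aσ_k} f_k strongly continuous in a and lim_{a→0} P_a = id, which is moreover strongly separable with window element equal to η_a. -/
/-!
Everything is diagonal in the basis `f_k`: each structure map multiplies coordinates by
`ε_k^{±1} e^{-aσ_k}`, so every axiom reduces to `e^{-aσ_k} e^{-bσ_k} = e^{-(a+b)σ_k}` and the
cancellation of `ε_k`. Boundedness rests on the fact that `x ↦ (c_j x_{g j})_j` is bounded on `ℓ²`
when `c ∈ ℓ^∞` and `g` is injective on the support of `c`; splitting `a = a/2 + a/2` writes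
`e^{-aσ}` and `ε e^{-aσ}` as products of an `ℓ^∞` and an `ℓ²` sequence, so both lie in `ℓ²`.
Strong continuity of `P_a` is dominated convergence, as `|e^{-aσ_k}|` is bounded for `a ∈ [0, t]`
by its values at the endpoints.
-/

open Filter Function Set Topology
open scoped lp ENNReal

namespace DiagonalRFA

section L2

variable {α β : Type*}

theorem memℓp_two_iff_summable_sq {f : α → ℂ} :
    Memℓp f 2 ↔ Summable fun k => ‖f k‖ ^ 2 := by
  simp [memℓp_gen_iff]

theorem sum_norm_sq_le_norm_sq (x : ℓ²(α, ℂ)) (s : Finset α) :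
    ∑ k ∈ s, ‖x k‖ ^ 2 ≤ ‖x‖ ^ 2 := by
  simpa [Real.rpow_two] using lp.sum_rpow_le_norm_rpow (by norm_num) x s

theorem norm_sq_eq_tsum (x : ℓ²(α, ℂ)) : ‖x‖ ^ 2 = ∑' k, ‖x k‖ ^ 2 := by
  simpa [Real.rpow_two] using lp.norm_rpow_eq_tsum (by norm_num) x

theorem sum_norm_mul_comp_sq_le {g : β → α} {c : β → ℂ} {C : ℝ} (hc : ∀ j, ‖c j‖ ≤ C)
    (hg : InjOn g (support c)) (x : ℓ²(α, ℂ)) (s : Finset β) :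
    ∑ j ∈ s, ‖c j * x (g j)‖ ^ 2 ≤ (C * ‖x‖) ^ 2 := by
  classical
  set t := s.filter fun j => c j ≠ 0
  have hgt : InjOn g t := hg.mono fun j hj => (Finset.mem_filter.1 hj).2
  calc ∑ j ∈ s, ‖c j * x (g j)‖ ^ 2 = ∑ j ∈ t, ‖c j * x (g j)‖ ^ 2 :=
        (Finset.sum_filter_of_ne (p := fun j => c j ≠ 0)
          fun j _ hj hc0 => hj (by simp [hc0])).symm
    _ ≤ ∑ j ∈ t, C ^ 2 * ‖x (g j)‖ ^ 2 :=
        Finset.sum_le_sum fun j _ => by rw [norm_mul, mul_pow]; gcongr; exact hc j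
    _ = C ^ 2 * ∑ k ∈ t.image g, ‖x k‖ ^ 2 := by rw [Finset.mul_sum, Finset.sum_image hgt]
    _ ≤ C ^ 2 * ‖x‖ ^ 2 := by gcongr; exact sum_norm_sq_le_norm_sq x _
    _ = (C * ‖x‖) ^ 2 := by ring

theorem memℓp_two_mul_comp {g : β → α} {c : β → ℂ} (hc : Memℓp c ∞) (hg : InjOn g (support c))
    {x : α → ℂ} (hx : Memℓp x 2) : Memℓp (fun j => c j * x (g j)) 2 :=
  memℓp_gen' (C := ((⨆ j, ‖c j‖) * ‖(⟨x, hx⟩ : ℓ²(α, ℂ))‖) ^ 2) fun s => by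
    simpa [Real.rpow_two] using
      sum_norm_mul_comp_sq_le (le_ciSup (memℓp_infty_iff.1 hc)) hg ⟨x, hx⟩ s

theorem memℓp_two_mul {c x : α → ℂ} (hc : Memℓp c ∞) (hx : Memℓp x 2) :
    Memℓp (fun j => c j * x j) 2 :=
  memℓp_two_mul_comp hc injective_id.injOn hx

open Classical in
noncomputable def weightedComp (g : β → α) (c : β → ℂ) : ℓ²(α, ℂ) →L[ℂ] ℓ²(β, ℂ) :=
  if h : Memℓp c ∞ ∧ InjOn g (support c) then
    LinearMap.mkContinuous
      { toFun := fun x => ⟨fun j => c j * x (g j), memℓp_two_mul_comp h.1 h.2 (lp.memℓp x)⟩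
        map_add' := fun x y => lp.ext <| funext fun j => mul_add _ _ _
        map_smul' := fun r x => lp.ext <| funext fun j => by simp [mul_left_comm] }
      (⨆ j, ‖c j‖) fun x =>
        lp.norm_le_of_forall_sum_le (by norm_num)
          (mul_nonneg (Real.iSup_nonneg fun j => norm_nonneg _) (norm_nonneg x)) fun s => by
            simpa [Real.rpow_two] using
              sum_norm_mul_comp_sq_le (le_ciSup (memℓp_infty_iff.1 h.1)) h.2 x s
  else 0

theorem weightedComp_apply {g : β → α} {c : β → ℂ} (hc : Memℓp c ∞) (hg : InjOn g (support c))
    (x : ℓ²(α, ℂ)) (j : β) : weightedComp g c x j = c j * x (g j) := by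
  rw [weightedComp, dif_pos ⟨hc, hg⟩]
  rfl

theorem tendsto_weightedComp_id {ι : Type*} {l : Filter ι} {c : ι → α → ℂ} {c₀ : α → ℂ} {B : ℝ}
    (hB : ∀ᶠ i in l, ∀ k, ‖c i k‖ ≤ B) (hB₀ : ∀ k, ‖c₀ k‖ ≤ B)
    (hc : ∀ k, Tendsto (fun i => c i k) l (𝓝 (c₀ k))) (x : ℓ²(α, ℂ)) :
    Tendsto (fun i => weightedComp id (c i) x) l (𝓝 (weightedComp id c₀ x)) := by
  have hbdd {f : α → ℂ} (hf : ∀ k, ‖f k‖ ≤ B) : Memℓp f ∞ :=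
    memℓp_infty_iff.2 ⟨B, forall_mem_range.2 hf⟩
  have hsq : ∀ᶠ i in l, ‖weightedComp id (c i) x - weightedComp id c₀ x‖ ^ 2 =
      ∑' k, ‖(c i k - c₀ k) * x k‖ ^ 2 := by
    filter_upwards [hB] with i hi
    simp only [norm_sq_eq_tsum, lp.coeFn_sub, Pi.sub_apply, sub_mul, id,
      weightedComp_apply (hbdd hi) injective_id.injOn,
      weightedComp_apply (hbdd hB₀) injective_id.injOn]
  have hsum : Tendsto (fun i => ∑' k, ‖(c i k - c₀ k) * x k‖ ^ 2) l (𝓝 0) := by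
    simpa using tendsto_tsum_of_dominated_convergence
      (f := fun i k => ‖(c i k - c₀ k) * x k‖ ^ 2) (g := fun _ => 0)
      (bound := fun k => (2 * B) ^ 2 * ‖x k‖ ^ 2)
      ((memℓp_two_iff_summable_sq.1 (lp.memℓp x)).mul_left _)
      (fun k => by simpa using (((hc k).sub_const (c₀ k)).mul_const (x k)).norm.pow 2)
      (by
        filter_upwards [hB] with i hi k
        rw [norm_pow, norm_norm, norm_mul, mul_pow]
        gcongr
        exact (norm_sub_le _ _).trans (by linarith [hi k, hB₀ k]))
  have hnorm_sq := hsum.congr' (hsq.mono fun i hi => hi.symm)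
  rw [tendsto_iff_norm_sub_tendsto_zero]
  simpa [Function.comp_def, Real.sqrt_sq (norm_nonneg _)] using
    (Real.continuous_sqrt.tendsto 0).comp hnorm_sq

open Classical in
noncomputable def toL2 (f : α → ℂ) : ℓ²(α, ℂ) := if h : Memℓp f 2 then ⟨f, h⟩ else 0

theorem toL2_apply {f : α → ℂ} (hf : Memℓp f 2) (k : α) : toL2 f k = f k := by
  rw [toL2, dif_pos hf]

noncomputable def pairing (f : α → ℂ) : ℓ²(α, ℂ) →L[ℂ] ℂ := innerSL ℂ (toL2 (star f))

theorem pairing_apply {f : α → ℂ} (hf : Memℓp f 2) (x : ℓ²(α, ℂ)) :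
    pairing f x = ∑' k, f k * x k := by
  rw [pairing, innerSL_apply_apply, lp.inner_eq_tsum]
  refine tsum_congr fun k => ?_
  simp [toL2_apply hf.star_mem, mul_comm]

end L2

section Family

variable {I : Type*}

noncomputable def weight (σ : I → ℂ) (a : ℝ) (k : I) : ℂ := Complex.exp (-(a : ℂ) * σ k)

theorem weight_add (σ : I → ℂ) (a b : ℝ) (k : I) :
    weight σ (a + b) k = weight σ a k * weight σ b k := by
  simp only [weight, ← Complex.exp_add]
  push_cast
  ring_nf

theorem weight_zero (σ : I → ℂ) : weight σ 0 = 1 := by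
  ext k
  simp [weight]

theorem continuous_weight (σ : I → ℂ) (k : I) : Continuous fun a : ℝ => weight σ a k := by
  unfold weight
  fun_prop

theorem norm_weight_le_max_one (σ : I → ℂ) (k : I) {a t : ℝ} (ha : 0 ≤ a) (hat : a ≤ t) :
    ‖weight σ a k‖ ≤ max 1 ‖weight σ t k‖ := by
  simp only [weight, Complex.norm_exp, Complex.mul_re, Complex.neg_re, Complex.ofReal_re,
    Complex.neg_im, Complex.ofReal_im, neg_zero, zero_mul, sub_zero]
  rcases le_total 0 (σ k).re with h | h
  · exact le_max_of_le_left (Real.exp_le_one_iff.2 (by nlinarith))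
  · exact le_max_of_le_right (Real.exp_le_exp.2 (by nlinarith))

theorem mul_weight_mul_div_weight {ε : I → ℂ} (σ : I → ℂ) {k : I} (hk : ε k ≠ 0) (a b : ℝ) :
    ε k * weight σ a k * (weight σ b k / ε k) = weight σ (a + b) k := by
  rw [weight_add]
  field_simp

theorem div_weight_mul_mul_weight {ε : I → ℂ} (σ : I → ℂ) {k : I} (hk : ε k ≠ 0) (a b : ℝ) :
    weight σ a k / ε k * (ε k * weight σ b k) = weight σ (a + b) k := by
  rw [weight_add]
  field_simp

structure Admissible (ε σ : I → ℂ) : Prop where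
  ne_zero : ∀ k, ε k ≠ 0
  memℓp_infty : ∀ a : ℝ, 0 < a → Memℓp (fun k => ε k * weight σ a k) ∞
  memℓp_two : ∀ a : ℝ, 0 < a → Memℓp (fun k => weight σ a k / ε k) 2

namespace Admissible

variable {ε σ : I → ℂ} {a : ℝ}

theorem memℓp_two_weight (h : Admissible ε σ) (ha : 0 < a) : Memℓp (weight σ a) 2 := by
  have hsplit : weight σ a = fun k => ε k * weight σ (a / 2) k * (weight σ (a / 2) k / ε k) :=
    funext fun k => by rw [mul_weight_mul_div_weight σ (h.ne_zero k), add_halves]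
  rw [hsplit]
  exact memℓp_two_mul (h.memℓp_infty _ (half_pos ha)) (h.memℓp_two _ (half_pos ha))

theorem memℓp_infty_weight (h : Admissible ε σ) (ha : 0 < a) : Memℓp (weight σ a) ∞ :=
  (h.memℓp_two_weight ha).of_exponent_ge le_top

theorem memℓp_two_mul_weight (h : Admissible ε σ) (ha : 0 < a) :
    Memℓp (fun k => ε k * weight σ a k) 2 := by
  have hsplit : (fun k => ε k * weight σ a k) =
      fun k => ε k * weight σ (a / 2) k * weight σ (a / 2) k :=
    funext fun k => by rw [mul_assoc, ← weight_add, add_halves]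
  rw [hsplit]
  exact memℓp_two_mul (h.memℓp_infty _ (half_pos ha)) (h.memℓp_two_weight (half_pos ha))

end Admissible

variable (ε σ : I → ℂ)

noncomputable def mul (a : ℝ) : ℓ²(I × I, ℂ) →L[ℂ] ℓ²(I, ℂ) :=
  weightedComp (fun k => (k, k)) fun k => ε k * weight σ a k

noncomputable def unit (a : ℝ) : ℓ²(I, ℂ) := toL2 fun k => weight σ a k / ε k

noncomputable def comul [DecidableEq I] (a : ℝ) : ℓ²(I, ℂ) →L[ℂ] ℓ²(I × I, ℂ) :=
  weightedComp Prod.fst fun p => if p.1 = p.2 then weight σ a p.1 / ε p.1 else 0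

noncomputable def counit (a : ℝ) : ℓ²(I, ℂ) →L[ℂ] ℂ := pairing fun k => ε k * weight σ a k

noncomputable def propagator (a : ℝ) : ℓ²(I, ℂ) →L[ℂ] ℓ²(I, ℂ) := weightedComp id (weight σ a)

theorem propagator_zero : propagator σ 0 = ContinuousLinearMap.id ℂ ℓ²(I, ℂ) := by
  ext1 x
  refine lp.ext (funext fun k => ?_)
  rw [propagator, weight_zero, weightedComp_apply one_memℓp_infty injective_id.injOn]
  simp

namespace Admissible

variable {ε σ} {a b : ℝ}

theorem mul_apply (h : Admissible ε σ) (ha : 0 < a) (u : ℓ²(I × I, ℂ)) (k : I) :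
    mul ε σ a u k = ε k * weight σ a k * u (k, k) :=
  weightedComp_apply (h.memℓp_infty a ha) (fun _ _ _ _ hkj => congrArg Prod.fst hkj) u k

theorem unit_apply (h : Admissible ε σ) (ha : 0 < a) (k : I) :
    unit ε σ a k = weight σ a k / ε k :=
  toL2_apply (h.memℓp_two a ha) k

theorem comul_apply [DecidableEq I] (h : Admissible ε σ) (ha : 0 < a) (x : ℓ²(I, ℂ))
    (p : I × I) :
    comul ε σ a x p = if p.1 = p.2 then weight σ a p.1 / ε p.1 * x p.1 else 0 := by
  obtain ⟨C, hC⟩ := memℓp_infty_iff.1 ((h.memℓp_two a ha).of_exponent_ge le_top)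
  have hbdd : Memℓp (fun p : I × I => if p.1 = p.2 then weight σ a p.1 / ε p.1 else 0) ∞ := by
    refine memℓp_infty_iff.2 ⟨max C 0, forall_mem_range.2 fun p => ?_⟩
    split_ifs
    · exact le_max_of_le_left (hC ⟨p.1, rfl⟩)
    · simp
  have hinj : InjOn Prod.fst
      (support fun p : I × I => if p.1 = p.2 then weight σ a p.1 / ε p.1 else 0) := by
    intro p hp q hq hpq
    simp only [mem_support, ne_eq, ite_eq_right_iff, not_forall] at hp hq
    exact Prod.ext hpq (hp.1 ▸ hq.1 ▸ hpq)
  rw [comul, weightedComp_apply hbdd hinj, ite_mul, zero_mul]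

theorem counit_apply (h : Admissible ε σ) (ha : 0 < a) (x : ℓ²(I, ℂ)) :
    counit ε σ a x = ∑' k, ε k * weight σ a k * x k :=
  pairing_apply (h.memℓp_two_mul_weight ha) x

theorem propagator_apply (h : Admissible ε σ) (ha : 0 < a) (x : ℓ²(I, ℂ)) (k : I) :
    propagator σ a x k = weight σ a k * x k :=
  weightedComp_apply (h.memℓp_infty_weight ha) injective_id.injOn x k

theorem mul_swap (h : Admissible ε σ) (ha : 0 < a) {u v : ℓ²(I × I, ℂ)}
    (hv : ∀ p : I × I, v p = u (p.2, p.1)) : mul ε σ a v = mul ε σ a u :=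
  lp.ext <| funext fun k => by rw [h.mul_apply ha, h.mul_apply ha, hv]

theorem mul_unit (h : Admissible ε σ) (ha : 0 < a) (hb : 0 < b) {x : ℓ²(I, ℂ)}
    {u : ℓ²(I × I, ℂ)} (hu : ∀ p : I × I, u p = x p.1 * unit ε σ b p.2) :
    mul ε σ a u = propagator σ (a + b) x :=
  lp.ext <| funext fun k => by
    rw [h.mul_apply ha, hu, h.unit_apply hb, h.propagator_apply (add_pos ha hb),
      ← mul_weight_mul_div_weight σ (h.ne_zero k)]
    ring

theorem propagator_unit (h : Admissible ε σ) (ha : 0 < a) (hb : 0 < b) :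
    propagator σ a (unit ε σ b) = unit ε σ (a + b) :=
  lp.ext <| funext fun k => by
    rw [h.propagator_apply ha, h.unit_apply hb, h.unit_apply (add_pos ha hb), weight_add,
      mul_div_assoc]

theorem mul_comul [DecidableEq I] (h : Admissible ε σ) (ha : 0 < a) (hb : 0 < b)
    (x : ℓ²(I, ℂ)) : mul ε σ a (comul ε σ b x) = propagator σ (a + b) x :=
  lp.ext <| funext fun k => by
    rw [h.mul_apply ha, h.comul_apply hb, if_pos rfl, h.propagator_apply (add_pos ha hb),
      ← mul_weight_mul_div_weight σ (h.ne_zero k)]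
    ring

theorem comul_mul_apply [DecidableEq I] (h : Admissible ε σ) (ha : 0 < a) (hb : 0 < b)
    (u : ℓ²(I × I, ℂ)) (p : I × I) :
    comul ε σ a (mul ε σ b u) p =
      if p.1 = p.2 then weight σ (a + b) p.1 * u (p.1, p.1) else 0 := by
  rw [h.comul_apply ha, h.mul_apply hb, ← div_weight_mul_mul_weight σ (h.ne_zero p.1)]
  simp only [mul_assoc]

theorem comul_counit_apply [DecidableEq I] (h : Admissible ε σ) (ha : 0 < a) (hb : 0 < b)
    (x : ℓ²(I, ℂ)) (k : I) :
    ∑' j, comul ε σ a x (k, j) * (ε j * weight σ b j) = propagator σ (a + b) x k := by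
  rw [tsum_eq_single k fun j hj => by rw [h.comul_apply ha, if_neg (Ne.symm hj), zero_mul],
    h.comul_apply ha, if_pos rfl, h.propagator_apply (add_pos ha hb),
    ← div_weight_mul_mul_weight σ (h.ne_zero k)]
  ring

theorem tendsto_propagator (h : Admissible ε σ) {a₀ : ℝ} (ha₀ : 0 ≤ a₀) (x : ℓ²(I, ℂ)) :
    Tendsto (fun a => propagator σ a x) (𝓝[Ioi 0] a₀) (𝓝 (propagator σ a₀ x)) := by
  obtain ⟨C, hC⟩ := memℓp_infty_iff.1 (h.memℓp_infty_weight (a := a₀ + 1) (by linarith))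
  have hbound : ∀ a ∈ Icc 0 (a₀ + 1), ∀ k, ‖weight σ a k‖ ≤ max 1 C := fun a ha k =>
    (norm_weight_le_max_one σ k ha.1 ha.2).trans (max_le_max le_rfl (hC ⟨k, rfl⟩))
  have hnear : ∀ᶠ a in 𝓝[Ioi 0] a₀, a ∈ Icc 0 (a₀ + 1) :=
    mem_of_superset (inter_mem_nhdsWithin _ (Iio_mem_nhds (lt_add_one a₀)))
      fun a ha => ⟨ha.1.le, ha.2.le⟩
  exact tendsto_weightedComp_id (hnear.mono hbound) (hbound a₀ ⟨ha₀, by linarith⟩)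
    (fun k => ((continuous_weight σ k).tendsto a₀).mono_left nhdsWithin_le_nhds) x

end Admissible

end Family

end DiagonalRFA

open DiagonalRFA

theorem stmt18_general {I : Type*} [DecidableEq I] (ε σ : I → ℂ) (hε : ∀ k, ε k ≠ 0)
    (hsup : ∀ a : ℝ, 0 < a →
      BddAbove (Set.range fun k : I => ‖ε k * Complex.exp (-(a : ℂ) * σ k)‖))
    (hsum : ∀ a : ℝ, 0 < a →
      Summable fun k : I => ‖Complex.exp (-(a : ℂ) * σ k) / ε k‖ ^ 2) :
    ∃ (μop : ℝ → (lp (fun _ : I × I => ℂ) 2 →L[ℂ] lp (fun _ : I => ℂ) 2))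
      (Δop : ℝ → (lp (fun _ : I => ℂ) 2 →L[ℂ] lp (fun _ : I × I => ℂ) 2))
      (ηv : ℝ → lp (fun _ : I => ℂ) 2)
      (εop : ℝ → (lp (fun _ : I => ℂ) 2 →L[ℂ] ℂ))
      (Pop : ℝ → (lp (fun _ : I => ℂ) 2 →L[ℂ] lp (fun _ : I => ℂ) 2)),
      -- component formulas of the structure maps
      (∀ a : ℝ, 0 < a → ∀ (u : lp (fun _ : I × I => ℂ) 2) (k : I),
        μop a u k = ε k * Complex.exp (-(a : ℂ) * σ k) * u (k, k)) ∧
      (∀ a : ℝ, 0 < a → ∀ k : I, ηv a k = Complex.exp (-(a : ℂ) * σ k) / ε k) ∧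
      (∀ a : ℝ, 0 < a → ∀ (x : lp (fun _ : I => ℂ) 2) (p : I × I),
        Δop a x p = if p.1 = p.2
          then Complex.exp (-(a : ℂ) * σ p.1) / ε p.1 * x p.1 else 0) ∧
      (∀ a : ℝ, 0 < a → ∀ x : lp (fun _ : I => ℂ) 2,
        εop a x = ∑' k : I, ε k * Complex.exp (-(a : ℂ) * σ k) * x k) ∧
      (∀ a : ℝ, 0 < a → ∀ (x : lp (fun _ : I => ℂ) 2) (k : I),
        Pop a x k = Complex.exp (-(a : ℂ) * σ k) * x k) ∧
      -- commutativity of the product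
      (∀ a : ℝ, 0 < a → ∀ u v : lp (fun _ : I × I => ℂ) 2,
        (∀ p : I × I, v p = u (p.2, p.1)) → μop a v = μop a u) ∧
      -- area-additive unit law: μ_{a₁} ∘ (id ⊗ η_{a₂}) = P_{a₁+a₂}
      (∀ a₁ a₂ : ℝ, 0 < a₁ → 0 < a₂ →
        ∀ (x : lp (fun _ : I => ℂ) 2) (u : lp (fun _ : I × I => ℂ) 2),
        (∀ p : I × I, u p = x p.1 * ηv a₂ p.2) → μop a₁ u = Pop (a₁ + a₂) x) ∧
      -- area-additive counit law: (id ⊗ ε_{a₂}) ∘ Δ_{a₁} = P_{a₁+a₂}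
      (∀ a₁ a₂ : ℝ, 0 < a₁ → 0 < a₂ → ∀ (x : lp (fun _ : I => ℂ) 2) (k : I),
        (∑' j : I, Δop a₁ x (k, j) * (ε j * Complex.exp (-(a₂ : ℂ) * σ j)))
          = Pop (a₁ + a₂) x k) ∧
      -- Frobenius relation: (id ⊗ μ_{a₁}) ∘ (Δ_{a₂} ⊗ id) = Δ_{b₁} ∘ μ_{b₂}
      (∀ a₁ a₂ b₁ b₂ : ℝ, 0 < a₁ → 0 < a₂ → 0 < b₁ → 0 < b₂ → a₁ + a₂ = b₁ + b₂ →
        ∀ u w : lp (fun _ : I × I => ℂ) 2,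
        (∀ q : I × I, w q = if q.1 = q.2
            then Complex.exp (-((a₁ + a₂ : ℝ) : ℂ) * σ q.1) * u (q.1, q.1) else 0) →
        Δop b₁ (μop b₂ u) = w) ∧
      -- strong continuity of P and convergence to the identity
      (∀ x : lp (fun _ : I => ℂ) 2, ContinuousOn (fun a : ℝ => Pop a x) (Set.Ioi 0)) ∧
      (∀ x : lp (fun _ : I => ℂ) 2,
        Filter.Tendsto (fun a : ℝ => Pop a x) (nhdsWithin 0 (Set.Ioi 0)) (nhds x)) ∧
      -- window element τ_a = μ_{a₁}(Δ_{a₂}(η_{a₃})) equals η_a ...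
      (∀ a₁ a₂ a₃ : ℝ, 0 < a₁ → 0 < a₂ → 0 < a₃ →
        μop a₁ (Δop a₂ (ηv a₃)) = ηv (a₁ + a₂ + a₃)) ∧
      -- ... and is invertible with inverse η (strong separability)
      (∀ a₁ a₂ a₃ : ℝ, 0 < a₁ → 0 < a₂ → 0 < a₃ →
        ∀ u : lp (fun _ : I × I => ℂ) 2,
        (∀ p : I × I, u p = ηv a₂ p.1 * ηv a₃ p.2) →
        μop a₁ u = ηv (a₁ + a₂ + a₃)) := by
  have h : Admissible ε σ :=
    ⟨hε, fun a ha => memℓp_infty_iff.2 (hsup a ha),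
      fun a ha => memℓp_two_iff_summable_sq.2 (hsum a ha)⟩
  refine ⟨mul ε σ, comul ε σ, unit ε σ, counit ε σ, propagator σ,
    fun a ha => h.mul_apply ha, fun a ha => h.unit_apply ha, fun a ha => h.comul_apply ha,
    fun a ha => h.counit_apply ha, fun a ha => h.propagator_apply ha,
    fun a ha u v => h.mul_swap ha, fun a₁ a₂ ha₁ ha₂ x u => h.mul_unit ha₁ ha₂,
    fun a₁ a₂ ha₁ ha₂ => h.comul_counit_apply ha₁ ha₂, ?_,
    fun x a ha => h.tendsto_propagator (le_of_lt ha) x, ?_, ?_, ?_⟩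
  · intro a₁ a₂ b₁ b₂ _ _ hb₁ hb₂ hab u w hw
    refine lp.ext <| funext fun p => ?_
    rw [h.comul_mul_apply hb₁ hb₂, hw, hab]
    rfl
  · intro x
    simpa [propagator_zero] using h.tendsto_propagator le_rfl x
  · intro a₁ a₂ a₃ ha₁ ha₂ ha₃
    rw [h.mul_comul ha₁ ha₂, h.propagator_unit (add_pos ha₁ ha₂) ha₃]
  · intro a₁ a₂ a₃ ha₁ ha₂ ha₃ u hu
    rw [h.mul_unit ha₁ ha₃ hu, h.propagator_unit (add_pos ha₁ ha₃) ha₂, add_right_comm]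

/-- The direct-sum RFA `A_{ε,σ} = ⊕_{k∈I} ℂ f_k` in `Hilb`.  Given a countable family
`(ε_k, σ_k)` with `sup_k |ε_k e^{-aσ_k}| < ∞` and `∑_k |e^{-aσ_k}/ε_k|² < ∞` for all
`a > 0`, the structure maps
`μ_a(f_k ⊗ f_j) = δ_{kj} ε_k e^{-aσ_k} f_k`, `η_a = ∑ (e^{-aσ_k}/ε_k) f_k`,
`Δ_a(f_k) = (e^{-aσ_k}/ε_k) f_k ⊗ f_k`, `ε_a(f_k) = ε_k e^{-aσ_k}`
are bounded operators (with `A ⊗ A` realised as `ℓ²(I × I)`) and define a commutative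
regularised Frobenius algebra with `P_a f_k = e^{-aσ_k} f_k` strongly continuous,
`lim_{a→0} P_a = id`, which is strongly separable with window element `η_a`
(its own inverse). -/
theorem stmt18 {I : Type*} [Countable I] [DecidableEq I] (ε σ : I → ℂ) (hε : ∀ k, ε k ≠ 0)
    (hsup : ∀ a : ℝ, 0 < a →
      BddAbove (Set.range fun k : I => ‖ε k * Complex.exp (-(a : ℂ) * σ k)‖))
    (hsum : ∀ a : ℝ, 0 < a →
      Summable fun k : I => ‖Complex.exp (-(a : ℂ) * σ k) / ε k‖ ^ 2) :
    ∃ (μop : ℝ → (lp (fun _ : I × I => ℂ) 2 →L[ℂ] lp (fun _ : I => ℂ) 2))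
      (Δop : ℝ → (lp (fun _ : I => ℂ) 2 →L[ℂ] lp (fun _ : I × I => ℂ) 2))
      (ηv : ℝ → lp (fun _ : I => ℂ) 2)
      (εop : ℝ → (lp (fun _ : I => ℂ) 2 →L[ℂ] ℂ))
      (Pop : ℝ → (lp (fun _ : I => ℂ) 2 →L[ℂ] lp (fun _ : I => ℂ) 2)),
      -- component formulas of the structure maps
      (∀ a : ℝ, 0 < a → ∀ (u : lp (fun _ : I × I => ℂ) 2) (k : I),
        μop a u k = ε k * Complex.exp (-(a : ℂ) * σ k) * u (k, k)) ∧
      (∀ a : ℝ, 0 < a → ∀ k : I, ηv a k = Complex.exp (-(a : ℂ) * σ k) / ε k) ∧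
      (∀ a : ℝ, 0 < a → ∀ (x : lp (fun _ : I => ℂ) 2) (p : I × I),
        Δop a x p = if p.1 = p.2
          then Complex.exp (-(a : ℂ) * σ p.1) / ε p.1 * x p.1 else 0) ∧
      (∀ a : ℝ, 0 < a → ∀ x : lp (fun _ : I => ℂ) 2,
        εop a x = ∑' k : I, ε k * Complex.exp (-(a : ℂ) * σ k) * x k) ∧
      (∀ a : ℝ, 0 < a → ∀ (x : lp (fun _ : I => ℂ) 2) (k : I),
        Pop a x k = Complex.exp (-(a : ℂ) * σ k) * x k) ∧
      -- commutativity of the product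
      (∀ a : ℝ, 0 < a → ∀ u v : lp (fun _ : I × I => ℂ) 2,
        (∀ p : I × I, v p = u (p.2, p.1)) → μop a v = μop a u) ∧
      -- area-additive unit law: μ_{a₁} ∘ (id ⊗ η_{a₂}) = P_{a₁+a₂}
      (∀ a₁ a₂ : ℝ, 0 < a₁ → 0 < a₂ →
        ∀ (x : lp (fun _ : I => ℂ) 2) (u : lp (fun _ : I × I => ℂ) 2),
        (∀ p : I × I, u p = x p.1 * ηv a₂ p.2) → μop a₁ u = Pop (a₁ + a₂) x) ∧
      -- area-additive counit law: (id ⊗ ε_{a₂}) ∘ Δ_{a₁} = P_{a₁+a₂}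
      (∀ a₁ a₂ : ℝ, 0 < a₁ → 0 < a₂ → ∀ (x : lp (fun _ : I => ℂ) 2) (k : I),
        (∑' j : I, Δop a₁ x (k, j) * (ε j * Complex.exp (-(a₂ : ℂ) * σ j)))
          = Pop (a₁ + a₂) x k) ∧
      -- Frobenius relation: (id ⊗ μ_{a₁}) ∘ (Δ_{a₂} ⊗ id) = Δ_{b₁} ∘ μ_{b₂}
      (∀ a₁ a₂ b₁ b₂ : ℝ, 0 < a₁ → 0 < a₂ → 0 < b₁ → 0 < b₂ → a₁ + a₂ = b₁ + b₂ →
        ∀ u w : lp (fun _ : I × I => ℂ) 2,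
        (∀ q : I × I, w q = if q.1 = q.2
            then Complex.exp (-((a₁ + a₂ : ℝ) : ℂ) * σ q.1) * u (q.1, q.1) else 0) →
        Δop b₁ (μop b₂ u) = w) ∧
      -- strong continuity of P and convergence to the identity
      (∀ x : lp (fun _ : I => ℂ) 2, ContinuousOn (fun a : ℝ => Pop a x) (Set.Ioi 0)) ∧
      (∀ x : lp (fun _ : I => ℂ) 2,
        Filter.Tendsto (fun a : ℝ => Pop a x) (nhdsWithin 0 (Set.Ioi 0)) (nhds x)) ∧
      -- window element τ_a = μ_{a₁}(Δ_{a₂}(η_{a₃})) equals η_a ...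
      (∀ a₁ a₂ a₃ : ℝ, 0 < a₁ → 0 < a₂ → 0 < a₃ →
        μop a₁ (Δop a₂ (ηv a₃)) = ηv (a₁ + a₂ + a₃)) ∧
      -- ... and is invertible with inverse η (strong separability)
      (∀ a₁ a₂ a₃ : ℝ, 0 < a₁ → 0 < a₂ → 0 < a₃ →
        ∀ u : lp (fun _ : I × I => ℂ) 2,
        (∀ p : I × I, u p = ηv a₂ p.1 * ηv a₃ p.2) →
        μop a₁ u = ηv (a₁ + a₂ + a₃)) :=
  stmt18_general ε σ hε hsup hsum
end
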